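/- arXiv:2510.18816 — 11 statements merged into one kernel-verified Lean document; each statement's English description precedes it below -/
import Mathlib

section
/- Let H be a complex Hilbert space, let V : H → H be a bounded linear operator that is an isometry (‖Vx‖ = ‖x‖ for all x ∈ H), and let λ ∈ ℂ with |λ| < 1. Then the bounded operator (V* + λ·1)(V + conj(λ)·1) is invertible, where V* denotes the Hilbert-space adjoint of V. -/
open ContinuousLinearMap

theorem stmt3 {H : Type*} [NormedAddCommGroup H] [InnerProductSpace ℂ H] [CompleteSpace H]
    (V : H →L[ℂ] H) (hV : ∀ x, ‖V x‖ = ‖x‖) (l : ℂ) (hl : ‖l‖ < 1) :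
    IsUnit ((ContinuousLinearMap.adjoint V + l • (1 : H →L[ℂ] H)) *
      (V + (starRingEnd ℂ) l • (1 : H →L[ℂ] H))) := by
  have hVV : ContinuousLinearMap.adjoint V * V = 1 :=
    (V.norm_map_iff_adjoint_comp_self).mp hV
  have hVn : ‖V‖ ≤ 1 := V.opNorm_le_bound zero_le_one (by simp [hV])
  have hAn : ‖ContinuousLinearMap.adjoint V‖ ≤ 1 := by
    rw [show ‖ContinuousLinearMap.adjoint V‖ = ‖V‖ from
      LinearIsometryEquiv.norm_map ContinuousLinearMap.adjoint V]
    exact hVn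
  set c : ℂ := 1 + l * (starRingEnd ℂ) l with hc
  have hcr : c = ((1 + ‖l‖ ^ 2 : ℝ) : ℂ) := by
    rw [hc, Complex.mul_conj, Complex.normSq_eq_norm_sq]
    push_cast
    ring
  have hcpos : (0:ℝ) < 1 + ‖l‖ ^ 2 := by positivity
  have hc0 : c ≠ 0 := by
    rw [hcr]
    exact_mod_cast hcpos.ne'
  -- expand the product
  have hexp : (ContinuousLinearMap.adjoint V + l • (1 : H →L[ℂ] H)) *
      (V + (starRingEnd ℂ) l • (1 : H →L[ℂ] H)) =
      c • ((1 : H →L[ℂ] H) - (-(c⁻¹) • ((starRingEnd ℂ) l • ContinuousLinearMap.adjoint V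
        + l • V))) := by
    rw [smul_sub, smul_smul, mul_neg, mul_inv_cancel₀ hc0]
    simp only [neg_smul, one_smul, sub_neg_eq_add]
    rw [mul_add, add_mul, add_mul, hVV]
    simp only [mul_smul_comm, smul_mul_assoc, mul_one, one_mul, smul_smul]
    rw [hc]
    module
  rw [hexp]
  have hT : ‖-(c⁻¹) • ((starRingEnd ℂ) l • ContinuousLinearMap.adjoint V + l • V)‖ < 1 := by
    have h1 : ‖(starRingEnd ℂ) l • ContinuousLinearMap.adjoint V + l • V‖ ≤ 2 * ‖l‖ := by
      calc ‖(starRingEnd ℂ) l • ContinuousLinearMap.adjoint V + l • V‖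
          ≤ ‖(starRingEnd ℂ) l • ContinuousLinearMap.adjoint V‖ + ‖l • V‖ := norm_add_le _ _
        _ ≤ ‖l‖ * 1 + ‖l‖ * 1 := by
            gcongr
            · rw [norm_smul]; gcongr; simp
            · rw [norm_smul]; gcongr
        _ = 2 * ‖l‖ := by ring
    have hcn : ‖-(c⁻¹)‖ = (1 + ‖l‖ ^ 2)⁻¹ := by
      rw [norm_neg, norm_inv, hcr, Complex.norm_real, Real.norm_of_nonneg hcpos.le]
    calc ‖-(c⁻¹) • ((starRingEnd ℂ) l • ContinuousLinearMap.adjoint V + l • V)‖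
        ≤ ‖-(c⁻¹)‖ * (2 * ‖l‖) := by rw [norm_smul]; gcongr
      _ = (1 + ‖l‖ ^ 2)⁻¹ * (2 * ‖l‖) := by rw [hcn]
      _ < 1 := by
          rw [inv_mul_lt_iff₀ hcpos]
          nlinarith [sq_nonneg (1 - ‖l‖), norm_nonneg l]
  have hu : IsUnit ((1 : H →L[ℂ] H) - (-(c⁻¹) • ((starRingEnd ℂ) l • ContinuousLinearMap.adjoint V
      + l • V))) := (Units.oneSub _ hT).isUnit
  have hcu : IsUnit (c • (1 : H →L[ℂ] H)) := by
    refine ⟨⟨c • 1, c⁻¹ • 1, ?_, ?_⟩, rfl⟩ <;> simp [smul_smul, mul_inv_cancel₀ hc0,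
      inv_mul_cancel₀ hc0]
  have := hcu.mul hu
  rwa [smul_mul_assoc, one_mul] at this
end

section
/- Let H be a complex Hilbert space, let V : H → H be a bounded linear operator that is an isometry (‖Vx‖ = ‖x‖ for all x ∈ H), and let λ_1, …, λ_d ∈ ℂ with |λ_j| < 1 for each j. Then the bounded operator p(V*) := ∏_{j=1}^d (V* + λ_j·1) is surjective, where V* denotes the Hilbert-space adjoint of V. -/
theorem stmt4 {H : Type*} [NormedAddCommGroup H] [InnerProductSpace ℂ H] [CompleteSpace H]
    (V : H →L[ℂ] H) (hV : ∀ x, ‖V x‖ = ‖x‖) (d : ℕ) (lam : Fin d → ℂ)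
    (hlam : ∀ j, ‖lam j‖ < 1) :
    Function.Surjective
      ⇑(List.ofFn fun j =>
          ContinuousLinearMap.adjoint V + lam j • (1 : H →L[ℂ] H)).prod := by
  have hVV : ContinuousLinearMap.adjoint V ∘L V = 1 :=
    (ContinuousLinearMap.norm_map_iff_adjoint_comp_self V).mp hV
  have hVnorm : ‖V‖ ≤ 1 := by
    apply ContinuousLinearMap.opNorm_le_bound _ zero_le_one
    intro x; rw [hV x, one_mul]
  have key : ∀ j, Function.Surjective
      ⇑(ContinuousLinearMap.adjoint V + lam j • (1 : H →L[ℂ] H)) := by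
    intro j
    have hs : ‖-(lam j • V)‖ < 1 := by
      rw [norm_neg, norm_smul]
      calc ‖lam j‖ * ‖V‖ ≤ ‖lam j‖ * 1 :=
            mul_le_mul_of_nonneg_left hVnorm (norm_nonneg _)
        _ < 1 := by simpa using hlam j
    set u : (H →L[ℂ] H)ˣ := Units.oneSub (-(lam j • V)) hs with hu
    have hueq : (u : H →L[ℂ] H) = 1 + lam j • V := by
      simp [hu, Units.oneSub, sub_neg_eq_add]
    intro y
    refine ⟨V ((↑u⁻¹ : H →L[ℂ] H) y), ?_⟩
    have h1 : (u : H →L[ℂ] H) ((↑u⁻¹ : H →L[ℂ] H) y) = y := by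
      have := u.mul_inv
      calc (u : H →L[ℂ] H) ((↑u⁻¹ : H →L[ℂ] H) y)
          = ((u : H →L[ℂ] H) * (↑u⁻¹ : H →L[ℂ] H)) y := rfl
        _ = y := by rw [this]; rfl
    simp only [ContinuousLinearMap.add_apply, ContinuousLinearMap.smul_apply,
      ContinuousLinearMap.one_apply]
    have h2 : ContinuousLinearMap.adjoint V (V ((↑u⁻¹ : H →L[ℂ] H) y))
        = (↑u⁻¹ : H →L[ℂ] H) y := by
      have := congrArg (fun T : H →L[ℂ] H => T ((↑u⁻¹ : H →L[ℂ] H) y)) hVV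
      simpa using this
    rw [h2]
    have := congrArg (fun T : H →L[ℂ] H => T ((↑u⁻¹ : H →L[ℂ] H) y)) hueq
    simp only [ContinuousLinearMap.add_apply, ContinuousLinearMap.smul_apply,
      ContinuousLinearMap.one_apply] at this
    rw [← this, h1]
  -- product of surjective operators is surjective
  have prodsurj : ∀ L : List (H →L[ℂ] H), (∀ a ∈ L, Function.Surjective ⇑a) →
      Function.Surjective ⇑L.prod := by
    intro L
    induction L with
    | nil => intro _; simp [Function.Surjective]
    | cons a l ih =>
      intro h
      rw [List.prod_cons]
      have : ⇑(a * l.prod) = ⇑a ∘ ⇑l.prod := rfl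
      rw [this]
      exact (h a (by simp)).comp (ih fun b hb => h b (List.mem_cons_of_mem _ hb))
  apply prodsurj
  intro a ha
  rw [List.mem_ofFn] at ha
  obtain ⟨j, rfl⟩ := ha
  exact key j
end

section
/- Let H be a complex Hilbert space, let V : H → H be a bounded linear operator that is an isometry (‖Vx‖ = ‖x‖ for all x ∈ H), and let λ ∈ ℂ with |λ| < 1. The operator 1 + conj(λ)V* is invertible (since ‖conj(λ)V*‖ < 1). Then the operator M := (V* + λ·1)(1 + conj(λ)V*)⁻¹ is a co-isometry, that is, M M* = 1. -/
theorem stmt5 {H : Type*} [NormedAddCommGroup H] [InnerProductSpace ℂ H] [CompleteSpace H]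
    (V : H →L[ℂ] H) (hV : ∀ x, ‖V x‖ = ‖x‖) (l : ℂ) (hl : ‖l‖ < 1) :
    IsUnit ((1 : H →L[ℂ] H) + (starRingEnd ℂ) l • ContinuousLinearMap.adjoint V) ∧
    ((ContinuousLinearMap.adjoint V + l • (1 : H →L[ℂ] H)) *
          Ring.inverse ((1 : H →L[ℂ] H) + (starRingEnd ℂ) l • ContinuousLinearMap.adjoint V)) *
        ContinuousLinearMap.adjoint
          ((ContinuousLinearMap.adjoint V + l • (1 : H →L[ℂ] H)) *
            Ring.inverse ((1 : H →L[ℂ] H) + (starRingEnd ℂ) l • ContinuousLinearMap.adjoint V)) =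
      1 := by
  set A := ContinuousLinearMap.adjoint V with hA
  have hAV : A * V = 1 := (V.norm_map_iff_adjoint_comp_self).mp hV
  have hVnorm : ‖V‖ ≤ 1 := V.opNorm_le_bound zero_le_one (by simp [hV])
  have hAnorm : ‖A‖ ≤ 1 := by
    rw [hA]
    calc ‖ContinuousLinearMap.adjoint V‖ = ‖V‖ :=
          ContinuousLinearMap.adjoint.norm_map V
      _ ≤ 1 := hVnorm
  have hsm : ‖-((starRingEnd ℂ) l • A)‖ < 1 := by
    rw [norm_neg, norm_smul]
    calc ‖(starRingEnd ℂ) l‖ * ‖A‖ ≤ ‖l‖ * 1 := by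
          apply mul_le_mul _ hAnorm (norm_nonneg _) (norm_nonneg _)
          simp
      _ < 1 := by simpa using hl
  set B := (1 : H →L[ℂ] H) + (starRingEnd ℂ) l • A with hB
  let u : (H →L[ℂ] H)ˣ := Units.oneSub _ hsm
  have hu : (u : H →L[ℂ] H) = B := sub_neg_eq_add 1 _
  have hBunit : IsUnit B := ⟨u, hu⟩
  refine ⟨hBunit, ?_⟩
  -- switch to star language
  have hstarA : star A = V := by
    rw [hA, ContinuousLinearMap.star_eq_adjoint, ContinuousLinearMap.adjoint_adjoint]
  -- the star unit
  let w : (H →L[ℂ] H)ˣ := ⟨star (u : H →L[ℂ] H), star ((u⁻¹ : (H →L[ℂ] H)ˣ) : H →L[ℂ] H),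
    by rw [← star_mul, u.inv_mul, star_one], by rw [← star_mul, u.mul_inv, star_one]⟩
  have hw : (w : H →L[ℂ] H) = (1 : H →L[ℂ] H) + l • V := by
    show star (u : H →L[ℂ] H) = _
    rw [hu, hB, star_add, star_one, star_smul, hstarA]
    simp
  have hinv : Ring.inverse B = ((u⁻¹ : (H →L[ℂ] H)ˣ) : H →L[ℂ] H) := by
    rw [← hu, Ring.inverse_unit]
  have hstarinv : star ((u⁻¹ : (H →L[ℂ] H)ˣ) : H →L[ℂ] H)
      = ((w⁻¹ : (H →L[ℂ] H)ˣ) : H →L[ℂ] H) := rfl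
  -- star of M
  rw [← ContinuousLinearMap.star_eq_adjoint
    ((A + l • 1) * Ring.inverse ((1 : H →L[ℂ] H) + (starRingEnd ℂ) l • A))]
  rw [← hB, hinv, star_mul, hstarinv]
  have hstarM : star (A + l • (1 : H →L[ℂ] H)) = V + (starRingEnd ℂ) l • 1 := by
    rw [star_add, star_smul, hstarA, star_one]
    rfl
  rw [hstarM]
  -- commutation facts
  have commAB : Commute (A + l • 1) ((u : H →L[ℂ] H)) := by
    rw [hu, hB]
    show _ = _
    simp only [mul_add, add_mul, mul_one, one_mul, mul_smul_comm, smul_mul_assoc, smul_add,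
      smul_smul]
    module
  have commVW : Commute (V + (starRingEnd ℂ) l • 1) ((w : H →L[ℂ] H)) := by
    rw [hw]
    show _ = _
    simp only [mul_add, add_mul, mul_one, one_mul, mul_smul_comm, smul_mul_assoc, smul_add,
      smul_smul]
    module
  have key : (A + l • (1 : H →L[ℂ] H)) * (V + (starRingEnd ℂ) l • 1)
      = (u : H →L[ℂ] H) * (w : H →L[ℂ] H) := by
    rw [hu, hw, hB]
    simp only [mul_add, add_mul, mul_one, one_mul, mul_smul_comm, smul_mul_assoc, hAV,
      smul_add, smul_smul, one_smul]
    module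
  calc (A + l • 1) * ((u⁻¹ : (H →L[ℂ] H)ˣ) : H →L[ℂ] H)
        * (((w⁻¹ : (H →L[ℂ] H)ˣ) : H →L[ℂ] H) * (V + (starRingEnd ℂ) l • 1))
      = ((u⁻¹ : (H →L[ℂ] H)ˣ) : H →L[ℂ] H) * ((A + l • 1) * (V + (starRingEnd ℂ) l • 1))
        * ((w⁻¹ : (H →L[ℂ] H)ˣ) : H →L[ℂ] H) := by
        rw [commAB.units_inv_right.eq, (commVW.units_inv_right.symm).eq]
        simp [mul_assoc]
    _ = 1 := by
        rw [key]
        simp [mul_assoc]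
end

section
/- Let H be a nontrivial complex Hilbert space, let V : H → H be a bounded linear operator that is an isometry (‖Vx‖ = ‖x‖ for all x ∈ H), and let λ_1, …, λ_d ∈ ℂ with |λ_j| < 1 for each j. Define the Blaschke operator B(V*) := ∏_{j=1}^d (V* + λ_j·1)(1 + conj(λ_j)V*)⁻¹, where each factor 1 + conj(λ_j)V* is invertible since ‖conj(λ_j)V*‖ < 1. Then B(V*) is a co-isometry, i.e. B(V*)·B(V*)* = 1, and ‖B(V*)‖ = 1. -/
open ContinuousLinearMap

/-- The Blaschke operator `B(V*) = ∏_j (V* + λ_j·1)(1 + conj(λ_j)V*)⁻¹`. -/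
noncomputable def blaschkeOp {H : Type*} [NormedAddCommGroup H] [InnerProductSpace ℂ H]
    [CompleteSpace H] (V : H →L[ℂ] H) {d : ℕ} (lam : Fin d → ℂ) : H →L[ℂ] H :=
  (List.ofFn fun j =>
    (ContinuousLinearMap.adjoint V + lam j • (1 : H →L[ℂ] H)) *
      Ring.inverse ((1 : H →L[ℂ] H) + (starRingEnd ℂ) (lam j) • ContinuousLinearMap.adjoint V)).prod

lemma list_coiso {R : Type*} [Ring R] [StarRing R] (l : List R)
    (h : ∀ f ∈ l, f * star f = 1) : l.prod * star l.prod = 1 := by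
  induction l with
  | nil => simp
  | cons a l ih =>
      have ha := h a List.mem_cons_self
      have hl := ih (fun f hf => h f (List.mem_cons_of_mem a hf))
      simp only [List.prod_cons, star_mul]
      calc a * l.prod * (star l.prod * star a)
          = a * (l.prod * star l.prod) * star a := by simp only [mul_assoc]
        _ = 1 := by rw [hl]; simpa using ha

lemma comm_inv {R : Type*} [Ring R] {a p : R} (hp : IsUnit p) (h : Commute a p) :
    a * Ring.inverse p = Ring.inverse p * a := by
  obtain ⟨u, rfl⟩ := hp
  rw [Ring.inverse_unit]
  exact (h.units_inv_right).eq

theorem stmt6 {H : Type*} [NormedAddCommGroup H] [InnerProductSpace ℂ H] [CompleteSpace H]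
    [Nontrivial H] (V : H →L[ℂ] H) (hV : ∀ x, ‖V x‖ = ‖x‖) (d : ℕ) (lam : Fin d → ℂ)
    (hlam : ∀ j, ‖lam j‖ < 1) :
    blaschkeOp V lam * ContinuousLinearMap.adjoint (blaschkeOp V lam) = 1 ∧
      ‖blaschkeOp V lam‖ = 1 := by
  set Vs := ContinuousLinearMap.adjoint V with hVs
  have hVnorm : ‖V‖ ≤ 1 := ContinuousLinearMap.opNorm_le_bound V zero_le_one
    (fun x => by rw [hV x, one_mul])
  -- V* V = 1
  have li : H →ₗᵢ[ℂ] H := ⟨V.toLinearMap, hV⟩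
  have hVV : Vs * V = 1 := by
    ext x
    apply ext_inner_right ℂ
    intro y
    simp only [ContinuousLinearMap.mul_apply, ContinuousLinearMap.one_apply, hVs]
    rw [ContinuousLinearMap.adjoint_inner_left]
    exact (⟨V.toLinearMap, hV⟩ : H →ₗᵢ[ℂ] H).inner_map_map x y
  -- invertibility
  have hunit : ∀ (c : ℂ), ‖c‖ < 1 → IsUnit ((1 : H →L[ℂ] H) + c • Vs) := by
    intro c hc
    have hn : ‖-(c • Vs)‖ < 1 := by
      rw [norm_neg, norm_smul]
      have : ‖Vs‖ ≤ 1 := by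
        rw [hVs]
        calc ‖ContinuousLinearMap.adjoint V‖ = ‖V‖ :=
              (ContinuousLinearMap.adjoint : (H →L[ℂ] H) ≃ₗᵢ⋆[ℂ] (H →L[ℂ] H)).norm_map V
          _ ≤ 1 := hVnorm
      calc ‖c‖ * ‖Vs‖ ≤ ‖c‖ * 1 := by
            exact mul_le_mul_of_nonneg_left this (norm_nonneg c)
        _ < 1 := by simpa using hc
    exact ⟨Units.oneSub (-(c • Vs)) hn, by simp [Units.oneSub]⟩
  -- each factor is a coisometry
  have hfac : ∀ f ∈ (List.ofFn fun j =>
      (Vs + lam j • (1 : H →L[ℂ] H)) *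
        Ring.inverse ((1 : H →L[ℂ] H) + (starRingEnd ℂ) (lam j) • Vs)),
      f * star f = 1 := by
    intro f hf
    rw [List.mem_ofFn] at hf
    obtain ⟨j, rfl⟩ := hf
    beta_reduce
    have haj : ‖lam j‖ < 1 := hlam j
    revert haj
    generalize lam j = a
    intro haj
    have hsVs : star Vs = V := by rw [hVs, ← ContinuousLinearMap.star_eq_adjoint, star_star]
    have hst1 : star ((1 : H →L[ℂ] H) + (starRingEnd ℂ) a • Vs) = 1 + a • V := by
      rw [star_add, star_one, star_smul, hsVs]
      simp only [starRingEnd_apply, star_star]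
    have hst2 : star (Vs + a • (1 : H →L[ℂ] H)) = V + (starRingEnd ℂ) a • 1 := by
      rw [star_add, star_smul, hsVs, star_one, starRingEnd_apply]
    have hstar : star ((Vs + a • (1 : H →L[ℂ] H)) *
          Ring.inverse (1 + (starRingEnd ℂ) a • Vs))
        = Ring.inverse ((1 : H →L[ℂ] H) + a • V) * (V + (starRingEnd ℂ) a • 1) := by
      rw [star_mul, ← Ring.inverse_star, hst1, hst2]
    rw [hstar]
    have hu1 : IsUnit ((1 : H →L[ℂ] H) + (starRingEnd ℂ) a • Vs) :=
      hunit ((starRingEnd ℂ) a) (by simpa using haj)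
    have hu2 : IsUnit ((1 : H →L[ℂ] H) + a • V) := hst1 ▸ hu1.star
    have hc1 : (Vs + a • (1 : H →L[ℂ] H)) * Ring.inverse (1 + (starRingEnd ℂ) a • Vs)
        = Ring.inverse ((1 : H →L[ℂ] H) + (starRingEnd ℂ) a • Vs) * (Vs + a • 1) :=
      comm_inv hu1 (by unfold Commute SemiconjBy; simp only [add_mul, mul_add, smul_mul_assoc, mul_smul_comm, one_mul, mul_one]; module)
    have hc2 : Ring.inverse ((1 : H →L[ℂ] H) + a • V) * (V + (starRingEnd ℂ) a • 1)
        = (V + (starRingEnd ℂ) a • (1 : H →L[ℂ] H)) * Ring.inverse (1 + a • V) :=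
      (comm_inv hu2 (by unfold Commute SemiconjBy; simp only [add_mul, mul_add, smul_mul_assoc, mul_smul_comm, one_mul, mul_one]; module)).symm
    rw [hc1, hc2]
    have hkey : (Vs + a • (1 : H →L[ℂ] H)) * (V + (starRingEnd ℂ) a • 1)
        = ((1 : H →L[ℂ] H) + (starRingEnd ℂ) a • Vs) * (1 + a • V) := by
      have h1 : (Vs + a • (1 : H →L[ℂ] H)) * (V + (starRingEnd ℂ) a • 1)
          = Vs * V + (starRingEnd ℂ) a • Vs + a • V +
            (a * (starRingEnd ℂ) a) • (1 : H →L[ℂ] H) := by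
        simp only [add_mul, mul_add, smul_mul_assoc, mul_smul_comm, one_mul, mul_one,
          smul_smul]
        module
      have h2 : ((1 : H →L[ℂ] H) + (starRingEnd ℂ) a • Vs) * (1 + a • V)
          = 1 + (starRingEnd ℂ) a • Vs + a • V + ((starRingEnd ℂ) a * a) • (Vs * V) := by
        simp only [add_mul, mul_add, smul_mul_assoc, mul_smul_comm, one_mul, mul_one,
          smul_smul]
        module
      rw [h1, h2, hVV, mul_comm a ((starRingEnd ℂ) a)]
    calc Ring.inverse ((1 : H →L[ℂ] H) + (starRingEnd ℂ) a • Vs) * (Vs + a • 1) *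
          ((V + (starRingEnd ℂ) a • (1 : H →L[ℂ] H)) * Ring.inverse (1 + a • V))
        = Ring.inverse ((1 : H →L[ℂ] H) + (starRingEnd ℂ) a • Vs) *
            ((Vs + a • (1 : H →L[ℂ] H)) * (V + (starRingEnd ℂ) a • 1)) *
            Ring.inverse (1 + a • V) := by
          simp only [mul_assoc]
      _ = Ring.inverse ((1 : H →L[ℂ] H) + (starRingEnd ℂ) a • Vs) *
            (((1 : H →L[ℂ] H) + (starRingEnd ℂ) a • Vs) * (1 + a • V)) *
            Ring.inverse (1 + a • V) := by
          rw [hkey]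
      _ = (Ring.inverse ((1 : H →L[ℂ] H) + (starRingEnd ℂ) a • Vs) *
            ((1 : H →L[ℂ] H) + (starRingEnd ℂ) a • Vs)) *
            ((1 + a • V) * Ring.inverse (1 + a • V)) := by simp only [mul_assoc]
      _ = 1 := by rw [Ring.inverse_mul_cancel _ hu1, Ring.mul_inverse_cancel _ hu2, one_mul]
  have hco : blaschkeOp V lam * star (blaschkeOp V lam) = 1 :=
    list_coiso _ hfac
  have hadj : ContinuousLinearMap.adjoint (blaschkeOp V lam) = star (blaschkeOp V lam) :=
    (ContinuousLinearMap.star_eq_adjoint _).symm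
  refine ⟨by rw [hadj]; exact hco, ?_⟩
  have h1 : ‖star (blaschkeOp V lam)‖ = 1 := by
    have := CStarRing.norm_star_mul_self (x := star (blaschkeOp V lam))
    rw [star_star, hco, norm_one] at this
    nlinarith [norm_nonneg (star (blaschkeOp V lam))]
  rw [← norm_star]
  exact h1
end

section
/- Let λ_1, …, λ_d ∈ ℂ with |λ_j| < 1 for each j. Define the finite Blaschke product B(z) := ∏_{j=1}^d (z + λ_j)/(1 + conj(λ_j) z) and the Malmquist–Takenaka functions E_j(z) := (1 - |λ_j|²)^{1/2}/(1 + conj(λ_j) z) · ∏_{k=1}^{j-1} (z + λ_k)/(1 + conj(λ_k) z) for j = 1, …, d. Then for all z, w in the open unit disc, 1 - conj(B(w))·B(z) = Σ_{j=1}^d conj(E_j(w)) · (1 - conj(w)·z) · E_j(z). -/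
lemma den_ne (l x : ℂ) (hl : ‖l‖ < 1) (hx : ‖x‖ < 1) :
    1 + (starRingEnd ℂ) l * x ≠ 0 := by
  intro h
  have h1 : (starRingEnd ℂ) l * x = -1 := by linear_combination h
  have h2 : ‖(starRingEnd ℂ) l * x‖ < 1 := by
    rw [norm_mul, RCLike.norm_conj]
    calc ‖l‖ * ‖x‖ ≤ 1 * ‖x‖ := by nlinarith [norm_nonneg x]
    _ < 1 := by simpa using hx
  rw [h1] at h2; simp at h2

lemma core (l z w : ℂ) (hl : ‖l‖ < 1) (hz : ‖z‖ < 1) (hw : ‖w‖ < 1) :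
    1 - (starRingEnd ℂ) ((w + l) / (1 + (starRingEnd ℂ) l * w)) *
        ((z + l) / (1 + (starRingEnd ℂ) l * z)) =
    (starRingEnd ℂ) ((Real.sqrt (1 - ‖l‖ ^ 2) : ℂ) / (1 + (starRingEnd ℂ) l * w)) *
      ((1 - (starRingEnd ℂ) w * z) *
        ((Real.sqrt (1 - ‖l‖ ^ 2) : ℂ) / (1 + (starRingEnd ℂ) l * z))) := by
  have hA : 1 + (starRingEnd ℂ) l * z ≠ 0 := den_ne l z hl hz
  have hAw : 1 + (starRingEnd ℂ) l * w ≠ 0 := den_ne l w hl hw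
  have hAw' : 1 + l * (starRingEnd ℂ) w ≠ 0 := by
    intro h
    apply hAw
    have := congrArg (starRingEnd ℂ) h
    simpa [mul_comm] using this
  have hs : ((Real.sqrt (1 - ‖l‖ ^ 2) : ℝ) : ℂ) * ((Real.sqrt (1 - ‖l‖ ^ 2) : ℝ) : ℂ)
      = 1 - (starRingEnd ℂ) l * l := by
    have h0 : (0:ℝ) ≤ 1 - ‖l‖ ^ 2 := by nlinarith [norm_nonneg l]
    have hml : (starRingEnd ℂ) l * l = ((‖l‖^2 : ℝ) : ℂ) := by
      rw [mul_comm]; push_cast; exact Complex.mul_conj' l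
    rw [hml, ← Complex.ofReal_mul, Real.mul_self_sqrt h0]; push_cast; ring
  simp only [map_div₀, map_add, map_mul, map_one, Complex.conj_conj, Complex.conj_ofReal]
  have hAw'' : 1 + (starRingEnd ℂ) w * l ≠ 0 := by rwa [mul_comm] at hAw'
  field_simp
  ring_nf
  linear_combination (((starRingEnd ℂ) w * z) - 1) * hs


theorem stmt7 (d : ℕ) (lam : Fin d → ℂ) (hlam : ∀ j, ‖lam j‖ < 1)
    (B : ℂ → ℂ)
    (hB : ∀ z : ℂ, B z = ∏ j, (z + lam j) / (1 + (starRingEnd ℂ) (lam j) * z))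
    (E : Fin d → ℂ → ℂ)
    (hE : ∀ (j : Fin d) (z : ℂ), E j z =
        (Real.sqrt (1 - ‖lam j‖ ^ 2) : ℂ) / (1 + (starRingEnd ℂ) (lam j) * z) *
          ∏ k ∈ Finset.univ.filter (fun k => k < j),
            (z + lam k) / (1 + (starRingEnd ℂ) (lam k) * z)) :
    ∀ z ∈ Metric.ball (0 : ℂ) 1, ∀ w ∈ Metric.ball (0 : ℂ) 1,
      1 - (starRingEnd ℂ) (B w) * B z =
        ∑ j, (starRingEnd ℂ) (E j w) * ((1 - (starRingEnd ℂ) w * z) * E j z) := by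
  intro z hz w hw
  rw [Metric.mem_ball, dist_zero_right] at hz hw
  set b : Fin d → ℂ → ℂ := fun j x => (x + lam j) / (1 + (starRingEnd ℂ) (lam j) * x) with hb
  set Q : ℕ → ℂ → ℂ := fun n x => ∏ k ∈ Finset.univ.filter (fun k : Fin d => (k : ℕ) < n), b k x
    with hQ
  set f : ℕ → ℂ := fun n => (starRingEnd ℂ) (Q n w) * Q n z with hf
  have h0 : f 0 = 1 := by simp [hf, hQ]
  have hdd : f d = (starRingEnd ℂ) (B w) * B z := by
    have huniv : Finset.univ.filter (fun k : Fin d => (k : ℕ) < d) = Finset.univ := by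
      ext k; simp [k.isLt]
    simp only [hf, hQ, huniv, hB, hb]
  have key : ∀ j : Fin d, f j - f ((j : ℕ) + 1)
      = (starRingEnd ℂ) (E j w) * ((1 - (starRingEnd ℂ) w * z) * E j z) := by
    intro j
    have hfilt : Finset.univ.filter (fun k : Fin d => (k : ℕ) < (j : ℕ) + 1)
        = insert j (Finset.univ.filter (fun k : Fin d => (k : ℕ) < (j : ℕ))) := by
      ext k
      simp only [Finset.mem_insert, Finset.mem_filter, Finset.mem_univ, true_and,
        Nat.lt_succ_iff_lt_or_eq, Fin.ext_iff, Fin.lt_def]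
      tauto
    have hnotmem : j ∉ Finset.univ.filter (fun k : Fin d => (k : ℕ) < (j : ℕ)) := by simp
    have hQsucc : ∀ x, Q ((j : ℕ) + 1) x = b j x * Q (j : ℕ) x := by
      intro x
      simp only [hQ, hfilt, Finset.prod_insert hnotmem]
    have hfilt2 : Finset.univ.filter (fun k : Fin d => k < j)
        = Finset.univ.filter (fun k : Fin d => (k : ℕ) < (j : ℕ)) := by
      ext k
      simp only [Finset.mem_filter, Finset.mem_univ, true_and, Fin.lt_def]
    have hEw : E j w = (Real.sqrt (1 - ‖lam j‖ ^ 2) : ℂ) / (1 + (starRingEnd ℂ) (lam j) * w)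
        * Q (j : ℕ) w := by rw [hE, hfilt2]
    have hEz : E j z = (Real.sqrt (1 - ‖lam j‖ ^ 2) : ℂ) / (1 + (starRingEnd ℂ) (lam j) * z)
        * Q (j : ℕ) z := by rw [hE, hfilt2]
    have hcore := core (lam j) z w (hlam j) hz hw
    calc f j - f ((j : ℕ) + 1)
        = (starRingEnd ℂ) (Q j w) * Q j z *
            (1 - (starRingEnd ℂ) (b j w) * b j z) := by
          simp only [hf, hQsucc, map_mul]; ring
      _ = (starRingEnd ℂ) (Q j w) * Q j z *
            ((starRingEnd ℂ) ((Real.sqrt (1 - ‖lam j‖ ^ 2) : ℂ) / (1 + (starRingEnd ℂ) (lam j) * w)) *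
              ((1 - (starRingEnd ℂ) w * z) *
                ((Real.sqrt (1 - ‖lam j‖ ^ 2) : ℂ) / (1 + (starRingEnd ℂ) (lam j) * z)))) := by
          rw [hb]; rw [hcore]
      _ = (starRingEnd ℂ) (E j w) * ((1 - (starRingEnd ℂ) w * z) * E j z) := by
          rw [hEw, hEz, map_mul]; ring
  calc 1 - (starRingEnd ℂ) (B w) * B z = f 0 - f d := by rw [h0, hdd]
    _ = ∑ i ∈ Finset.range d, (f i - f (i + 1)) := (Finset.sum_range_sub' f d).symm
    _ = ∑ j : Fin d, (f j - f ((j : ℕ) + 1)) := (Fin.sum_univ_eq_sum_range _ d).symm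
    _ = _ := Finset.sum_congr rfl fun j _ => key j
end

section
/- Let H be an infinite-dimensional separable complex Hilbert space with orthonormal (Hilbert) basis (e_m)_{m∈ℕ}, let V : H → H be a bounded linear operator that is an isometry, and let λ_1, …, λ_d ∈ ℂ with |λ_j| < 1 for each j. Define B(V*) := ∏_{j=1}^d (V* + λ_j·1)(1 + conj(λ_j)V*)⁻¹ and b_m := B(V*) e_m for m ∈ ℕ. Then (b_m)_{m∈ℕ} is a Parseval frame for H: for every f ∈ H, the family (|⟨f, b_m⟩|²)_{m∈ℕ} is summable with sum Σ_{m∈ℕ} |⟨f, b_m⟩|² = ‖f‖². -/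
/-- In a monoid with star, if every element of a list satisfies `a * star a = 1`, so
does the product. -/
lemma list_prod_mul_star {R : Type*} [Monoid R] [StarMul R] :
    ∀ (l : List R), (∀ a ∈ l, a * star a = 1) → l.prod * star l.prod = 1
  | [], _ => by simp
  | a :: t, h => by
    have ht := list_prod_mul_star t (fun x hx => h x (List.mem_cons_of_mem a hx))
    have ha := h a List.mem_cons_self
    calc (a :: t).prod * star (a :: t).prod
        = a * (t.prod * star t.prod) * star a := by
          simp [star_mul, mul_assoc]
      _ = 1 := by rw [ht, mul_one, ha]

lemma factor_mul_star {H : Type*} [NormedAddCommGroup H] [InnerProductSpace ℂ H]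
    [CompleteSpace H] (V : H →L[ℂ] H) (hV : ∀ x, ‖V x‖ = ‖x‖) (μ : ℂ) (hμ : ‖μ‖ < 1) :
    ((ContinuousLinearMap.adjoint V + μ • (1 : H →L[ℂ] H)) *
      Ring.inverse ((1 : H →L[ℂ] H) + (starRingEnd ℂ) μ • ContinuousLinearMap.adjoint V)) *
    star ((ContinuousLinearMap.adjoint V + μ • (1 : H →L[ℂ] H)) *
      Ring.inverse ((1 : H →L[ℂ] H) + (starRingEnd ℂ) μ • ContinuousLinearMap.adjoint V)) = 1 := by
  set W := ContinuousLinearMap.adjoint V with hW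
  have hWV : W * V = 1 := (V.norm_map_iff_adjoint_comp_self).mp hV
  have hVnorm : ‖V‖ ≤ 1 := V.opNorm_le_bound zero_le_one (fun x => by rw [hV, one_mul])
  -- the operators
  set c : H →L[ℂ] H := 1 + μ • V with hc
  set cs : H →L[ℂ] H := 1 + (starRingEnd ℂ) μ • W with hcs
  set ds : H →L[ℂ] H := W + μ • 1 with hds
  set dd : H →L[ℂ] H := V + (starRingEnd ℂ) μ • 1 with hdd
  have hstar_c : star c = cs := by
    simp [hc, hcs, hW, star_smul, ContinuousLinearMap.star_eq_adjoint]
  have hstar_ds : star ds = dd := by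
    simp [hds, hdd, hW, star_smul, ContinuousLinearMap.star_eq_adjoint,
      ContinuousLinearMap.adjoint_adjoint]
  -- invertibility of c
  have hnorm : ‖-(μ • V)‖ < 1 := by
    rw [norm_neg, norm_smul]
    calc ‖μ‖ * ‖V‖ ≤ ‖μ‖ * 1 := by
          exact mul_le_mul_of_nonneg_left hVnorm (norm_nonneg μ)
      _ = ‖μ‖ := mul_one _
      _ < 1 := hμ
  have hcunit : IsUnit c := by
    have := (Units.oneSub (-(μ • V)) hnorm).isUnit
    rwa [Units.val_oneSub, sub_neg_eq_add] at this
  have hcsunit : IsUnit cs := by rw [← hstar_c]; exact hcunit.star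
  -- key algebraic identity : ds * dd = cs * c
  have hkey : ds * dd = cs * c := by
    simp only [hds, hdd, hcs, hc, mul_add, add_mul, mul_smul_comm, smul_mul_assoc, one_mul,
      mul_one, hWV, smul_smul]
    module
  -- c commutes with dd
  have hcomm : Commute c dd := by
    show c * dd = dd * c
    simp only [hc, hdd, mul_add, add_mul, mul_smul_comm, smul_mul_assoc, one_mul,
      mul_one, smul_smul]
    module
  have hcomm_inv : Commute (Ring.inverse c) dd := by
    obtain ⟨u, hu⟩ := hcunit
    rw [← hu, Ring.inverse_unit]
    exact Commute.units_inv_left (hu ▸ hcomm)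
  -- cs commutes with ds
  have hcomm2 : Commute cs ds := by
    show cs * ds = ds * cs
    simp only [hcs, hds, mul_add, add_mul, mul_smul_comm, smul_mul_assoc, one_mul,
      mul_one, smul_smul]
    module
  have hcomm2_inv : Commute (Ring.inverse cs) ds := by
    obtain ⟨u, hu⟩ := hcsunit
    rw [← hu, Ring.inverse_unit]
    exact Commute.units_inv_left (hu ▸ hcomm2)
  -- now compute
  have hstar_inv : star (Ring.inverse cs) = Ring.inverse c := by
    rw [← hstar_c, ← Ring.inverse_star, star_star]
  calc ds * Ring.inverse cs * star (ds * Ring.inverse cs)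
      = ds * Ring.inverse cs * (Ring.inverse c * dd) := by
        rw [star_mul, hstar_inv, hstar_ds]
    _ = Ring.inverse cs * ds * (Ring.inverse c * dd) := by rw [hcomm2_inv.eq]
    _ = Ring.inverse cs * (ds * (Ring.inverse c * dd)) := by rw [mul_assoc]
    _ = Ring.inverse cs * (ds * (dd * Ring.inverse c)) := by rw [hcomm_inv.eq]
    _ = Ring.inverse cs * (ds * dd * Ring.inverse c) := by rw [← mul_assoc ds]
    _ = Ring.inverse cs * (cs * c * Ring.inverse c) := by rw [hkey]
    _ = Ring.inverse cs * (cs * (c * Ring.inverse c)) := by rw [mul_assoc]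
    _ = 1 := by
        rw [Ring.mul_inverse_cancel c hcunit, mul_one, Ring.inverse_mul_cancel cs hcsunit]

theorem stmt9 {H : Type*} [NormedAddCommGroup H] [InnerProductSpace ℂ H] [CompleteSpace H]
    (e : HilbertBasis ℕ ℂ H) (V : H →L[ℂ] H) (hV : ∀ x, ‖V x‖ = ‖x‖) (d : ℕ)
    (lam : Fin d → ℂ) (hlam : ∀ j, ‖lam j‖ < 1) :
    ∀ f : H, HasSum (fun m : ℕ => ‖(inner ℂ f (blaschkeOp V lam (e m)) : ℂ)‖ ^ 2) (‖f‖ ^ 2) := by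
  intro f
  set B := blaschkeOp V lam with hB
  have hBB : B * star B = 1 := by
    apply list_prod_mul_star
    intro a ha
    rw [List.mem_ofFn] at ha
    obtain ⟨j, rfl⟩ := ha
    exact factor_mul_star V hV (lam j) (hlam j)
  set g := ContinuousLinearMap.adjoint B f with hg
  have hinner : ∀ m : ℕ, (inner ℂ f (B (e m)) : ℂ) = inner ℂ g (e m) := fun m =>
    (ContinuousLinearMap.adjoint_inner_left B (e m) f).symm
  have hgg : (inner ℂ g g : ℂ) = inner ℂ f f := by
    rw [hg]
    rw [ContinuousLinearMap.adjoint_inner_left]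
    have : B (ContinuousLinearMap.adjoint B f) = (B * star B) f := by
      rw [ContinuousLinearMap.mul_apply, ContinuousLinearMap.star_eq_adjoint]
    rw [this, hBB, ContinuousLinearMap.one_apply]
  have hsum := e.hasSum_inner_mul_inner g g
  have heq : (fun m : ℕ => (inner ℂ g (e m) : ℂ) * inner ℂ (e m) g) =
      fun m : ℕ => ((‖(inner ℂ f (B (e m)) : ℂ)‖ ^ 2 : ℝ) : ℂ) := by
    funext m
    rw [← inner_conj_symm (e m) g, RCLike.mul_conj, ← hinner m]
    norm_cast
  rw [heq, hgg, inner_self_eq_norm_sq_to_K] at hsum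
  exact Complex.hasSum_ofReal.mp (by convert hsum using 1; norm_cast; exact Complex.ofReal_pow _ _)
end

section
/- Let H be a complex Hilbert space and let V : H → H be a bounded linear operator that is an isometry such that ⋂_{n∈ℕ} range(V^n) = {0} (V is a pure isometry, i.e. a unilateral shift). Let (f_n)_{n∈ι} be an orthonormal family whose closed linear span equals ker(V*). Then the family (V^k f_n) indexed by (k, n) ∈ ℕ × ι is an orthonormal basis (Hilbert basis) of H: it is orthonormal and its closed linear span is all of H. -/
open scoped ComplexInnerProductSpace in
theorem stmt11 {H : Type*} [NormedAddCommGroup H] [InnerProductSpace ℂ H] [CompleteSpace H]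
    (V : H →L[ℂ] H) (hV : ∀ x, ‖V x‖ = ‖x‖)
    (hpure : (⨅ n : ℕ, LinearMap.range (V ^ n : H →ₗ[ℂ] H)) = ⊥)
    {ι : Type*} (f : ι → H) (hf : Orthonormal ℂ f)
    (hspan : (Submodule.span ℂ (Set.range f)).topologicalClosure =
      LinearMap.ker (ContinuousLinearMap.adjoint V : H →ₗ[ℂ] H)) :
    Orthonormal ℂ (fun p : ℕ × ι => (V ^ p.1) (f p.2)) ∧
      (Submodule.span ℂ (Set.range fun p : ℕ × ι => (V ^ p.1) (f p.2))).topologicalClosure =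
        ⊤ := by
  -- V as a linear isometry
  let Vi : H →ₗᵢ[ℂ] H := ⟨(V : H →ₗ[ℂ] H), hV⟩
  have hinner : ∀ x y : H, ⟪V x, V y⟫ = ⟪x, y⟫ := fun x y => Vi.inner_map_map x y
  have hpow : ∀ (k : ℕ) (x y : H), ⟪(V ^ k) x, (V ^ k) y⟫ = ⟪x, y⟫ := by
    intro k
    induction k with
    | zero => simp
    | succ n ih =>
      intro x y
      rw [pow_succ, ContinuousLinearMap.mul_apply, ContinuousLinearMap.mul_apply, ih, hinner]
  -- f i lies in the kernel of the adjoint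
  have hfk : ∀ i, f i ∈ LinearMap.ker (ContinuousLinearMap.adjoint V : H →ₗ[ℂ] H) := by
    intro i
    rw [← hspan]
    exact Submodule.le_topologicalClosure _
      (Submodule.subset_span ⟨i, rfl⟩)
  have hfV : ∀ (i : ι) (z : H), ⟪f i, V z⟫ = 0 := by
    intro i z
    rw [← ContinuousLinearMap.adjoint_inner_left]
    have : ContinuousLinearMap.adjoint V (f i) = 0 := hfk i
    rw [this, inner_zero_left]
  -- key orthogonality: for m ≥ 1, ⟪f i, (V^m) y⟫ = 0
  have hkey : ∀ (m : ℕ) (i : ι) (y : H), ⟪f i, (V ^ (m + 1)) y⟫ = 0 := by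
    intro m i y
    rw [pow_succ', ContinuousLinearMap.mul_apply]
    exact hfV i _
  classical
  have hortho : Orthonormal ℂ (fun p : ℕ × ι => (V ^ p.1) (f p.2)) := by
    rw [orthonormal_iff_ite]
    rintro ⟨k, i⟩ ⟨l, j⟩
    rcases lt_trichotomy k l with h | h | h
    · obtain ⟨m, rfl⟩ : ∃ m, l = k + (m + 1) :=
        ⟨l - k - 1, by omega⟩
      have : (V ^ (k + (m + 1))) (f j) = (V ^ k) ((V ^ (m + 1)) (f j)) := by
        rw [pow_add]; rfl
      have hne : (k, i) ≠ (k + (m + 1), j) := by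
        intro hc
        have := congrArg Prod.fst hc
        simp at this
      rw [this, hpow, hkey, if_neg hne]
    · subst h
      rw [hpow]
      have := (orthonormal_iff_ite.mp hf) i j
      rw [this]
      by_cases hij : i = j
      · subst hij; simp
      · simp [hij, Prod.ext_iff]
    · obtain ⟨m, rfl⟩ : ∃ m, k = l + (m + 1) :=
        ⟨k - l - 1, by omega⟩
      have : (V ^ (l + (m + 1))) (f i) = (V ^ l) ((V ^ (m + 1)) (f i)) := by
        rw [pow_add]; rfl
      have hne : (l + (m + 1), i) ≠ (l, j) := by
        intro hc
        have := congrArg Prod.fst hc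
        simp at this
      rw [← inner_conj_symm, this, hpow, hkey, map_zero, if_neg hne]
  refine ⟨hortho, ?_⟩
  -- range V is a closed submodule equal to (ker V*)ᗮ
  have hclosed : IsClosed (Set.range V) := by
    have : Isometry V := AddMonoidHomClass.isometry_of_norm V hV
    exact this.isClosedEmbedding.isClosed_range
  have hker : LinearMap.ker (ContinuousLinearMap.adjoint V : H →ₗ[ℂ] H) = (LinearMap.range (V : H →ₗ[ℂ] H))ᗮ := by
    ext w
    simp only [LinearMap.mem_ker, Submodule.mem_orthogonal]
    constructor
    · rintro hw u ⟨x, rfl⟩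
      rw [ContinuousLinearMap.coe_coe, ← ContinuousLinearMap.adjoint_inner_right]
      simp [show ContinuousLinearMap.adjoint V w = 0 from hw]
    · intro hw
      have : ∀ x : H, ⟪x, ContinuousLinearMap.adjoint V w⟫ = 0 := by
        intro x
        rw [ContinuousLinearMap.adjoint_inner_right]
        exact hw (V x) ⟨x, rfl⟩
      have h0 := this (ContinuousLinearMap.adjoint V w)
      rwa [inner_self_eq_zero] at h0
  have hrange_closed : (LinearMap.range (V : H →ₗ[ℂ] H) : Submodule ℂ H).topologicalClosure
      = LinearMap.range (V : H →ₗ[ℂ] H) := by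
    apply IsClosed.submodule_topologicalClosure_eq
    exact hclosed
  have hWperp : (LinearMap.ker (ContinuousLinearMap.adjoint V : H →ₗ[ℂ] H))ᗮ = LinearMap.range (V : H →ₗ[ℂ] H) := by
    rw [hker, Submodule.orthogonal_orthogonal_eq_closure, hrange_closed]
  rw [Submodule.topologicalClosure_eq_top_iff]
  rw [Submodule.eq_bot_iff]
  intro x hx
  have hxf : ∀ (k : ℕ) (i : ι), ⟪(V ^ k) (f i), x⟫ = 0 := by
    intro k i
    exact hx _ (Submodule.subset_span ⟨(k, i), rfl⟩)
  -- x is in all ranges of V^n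
  have hmem : ∀ n : ℕ, x ∈ LinearMap.range (V ^ n : H →ₗ[ℂ] H) := by
    intro n
    induction n with
    | zero => simp [pow_zero]
    | succ n ih =>
      obtain ⟨y, rfl⟩ := ih
      have hy : ∀ i, ⟪f i, y⟫ = 0 := by
        intro i
        have := hxf n i
        rwa [← ContinuousLinearMap.toLinearMap_pow, ContinuousLinearMap.coe_coe, hpow] at this
      have hyW : y ∈ (LinearMap.ker (ContinuousLinearMap.adjoint V : H →ₗ[ℂ] H))ᗮ := by
        rw [← hspan, ← Submodule.orthogonal_orthogonal_eq_closure,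
          Submodule.triorthogonal_eq_orthogonal]
        intro u hu
        refine Submodule.span_induction ?_ ?_ ?_ ?_ hu
        · rintro u ⟨i, rfl⟩
          exact hy i
        · simp
        · intro a b _ _ ha hb; rw [inner_add_left, ha, hb, add_zero]
        · intro c a _ ha; rw [inner_smul_left, ha, mul_zero]
      rw [hWperp] at hyW
      obtain ⟨z, rfl⟩ := hyW
      exact ⟨z, by rw [pow_succ, Module.End.mul_apply]⟩
  have : x ∈ (⨅ n : ℕ, LinearMap.range (V ^ n : H →ₗ[ℂ] H)) := by
    simp only [Submodule.mem_iInf]; exact hmem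
  rw [hpure] at this
  exact this
end

section
/- Let H be a complex Hilbert space, let V : H → H be a bounded linear operator that is an isometry, and let λ_1, …, λ_d ∈ ℂ with |λ_j| < 1 for each j. Define B(V*) := ∏_{j=1}^d (V* + λ_j·1)(1 + conj(λ_j)V*)⁻¹, and let E_j be the Malmquist–Takenaka functions E_j(z) := (1 - |λ_j|²)^{1/2}/(1 + conj(λ_j) z) · ∏_{k=1}^{j-1} (z + λ_k)/(1 + conj(λ_k) z). Suppose f ∈ ker(V*) with ‖f‖ = 1, let s be a positive integer, and set e := V^{s-1} f. Then ‖B(V*) e‖² = 1 - (1/((s-1)!)²) · Σ_{j=1}^d |D^{s-1}E_j(0)|², where D^{s-1}E_j(0) denotes the (s-1)-st iterated complex derivative of E_j at 0. -/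
/-- The Malmquist–Takenaka functions
`E_j(z) = (1-|λ_j|²)^{1/2}/(1 + conj(λ_j)z) · ∏_{k<j} (z+λ_k)/(1 + conj(λ_k)z)`. -/
noncomputable def mtFun {d : ℕ} (lam : Fin d → ℂ) (j : Fin d) (z : ℂ) : ℂ :=
  (Real.sqrt (1 - ‖lam j‖ ^ 2) : ℂ) / (1 + (starRingEnd ℂ) (lam j) * z) *
    ∏ k ∈ Finset.univ.filter (fun k => k < j), (z + lam k) / (1 + (starRingEnd ℂ) (lam k) * z)

namespace Stmt12Aux

open PowerSeries Finset

/-! ### Power series preliminaries -/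

noncomputable def geomPS (l : ℂ) : PowerSeries ℂ :=
  PowerSeries.mk fun n => (-((starRingEnd ℂ) l)) ^ n

noncomputable def mPS (l : ℂ) : PowerSeries ℂ := (PowerSeries.X + PowerSeries.C l) * geomPS l

noncomputable def gPS (l : ℂ) : PowerSeries ℂ :=
  PowerSeries.C ((Real.sqrt (1 - ‖l‖ ^ 2) : ℝ) : ℂ) * geomPS l

@[simp] lemma coeff_geomPS (l : ℂ) (n : ℕ) :
    PowerSeries.coeff n (geomPS l) = (-((starRingEnd ℂ) l)) ^ n :=
  PowerSeries.coeff_mk _ _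

lemma one_add_mul_geomPS (l : ℂ) :
    (1 + PowerSeries.C ((starRingEnd ℂ) l) * PowerSeries.X) * geomPS l = 1 := by
  ext n
  rw [add_mul, one_mul, mul_assoc, map_add, PowerSeries.coeff_C_mul]
  cases n with
  | zero => simp
  | succ n =>
    rw [PowerSeries.coeff_succ_X_mul, coeff_geomPS, coeff_geomPS, PowerSeries.coeff_one]
    simp [pow_succ]
    ring

lemma coeff_eq_geom (l : ℂ) (a : PowerSeries ℂ) (n : ℕ) :
    PowerSeries.coeff (n + 1) a
      = PowerSeries.coeff (n + 1) (geomPS l * a)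
        + (starRingEnd ℂ) l * PowerSeries.coeff n (geomPS l * a) := by
  conv_lhs => rw [show a = ((1 + PowerSeries.C ((starRingEnd ℂ) l) * PowerSeries.X) * geomPS l) * a by
    rw [one_add_mul_geomPS, one_mul]]
  rw [mul_assoc, add_mul, one_mul, map_add, mul_assoc, PowerSeries.coeff_C_mul,
    PowerSeries.coeff_succ_X_mul]

lemma coeff_zero_geom (l : ℂ) (a : PowerSeries ℂ) :
    PowerSeries.coeff 0 (geomPS l * a) = PowerSeries.coeff 0 a := by
  rw [PowerSeries.coeff_zero_eq_constantCoeff, map_mul]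
  simp [geomPS, PowerSeries.constantCoeff_mk]

lemma sq_norm_identity (l z w : ℂ) :
    ‖w + l * z‖ ^ 2 + (1 - ‖l‖ ^ 2) * ‖z‖ ^ 2
      = ‖z + (starRingEnd ℂ) l * w‖ ^ 2 + (1 - ‖l‖ ^ 2) * ‖w‖ ^ 2 := by
  simp only [Complex.sq_norm, Complex.normSq_apply, Complex.add_re,
    Complex.add_im, Complex.mul_re, Complex.mul_im, Complex.conj_re, Complex.conj_im]
  ring

lemma key (l : ℂ) (hl : ‖l‖ < 1) (a : PowerSeries ℂ) (n : ℕ) :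
    ∑ k ∈ range (n + 1), ‖PowerSeries.coeff k (mPS l * a)‖ ^ 2
        + ‖PowerSeries.coeff n (gPS l * a)‖ ^ 2
      = ∑ k ∈ range (n + 1), ‖PowerSeries.coeff k a‖ ^ 2 := by
  have ht : (0:ℝ) ≤ 1 - ‖l‖ ^ 2 := by nlinarith [norm_nonneg l]
  set b := geomPS l * a with hb
  have hm : mPS l * a = PowerSeries.X * b + PowerSeries.C l * b := by
    rw [mPS, mul_assoc, ← hb, add_mul]
  have hg : ∀ m, ‖PowerSeries.coeff m (gPS l * a)‖ ^ 2
      = (1 - ‖l‖ ^ 2) * ‖PowerSeries.coeff m b‖ ^ 2 := by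
    intro m
    rw [gPS, mul_assoc, ← hb, PowerSeries.coeff_C_mul, norm_mul, mul_pow, Complex.norm_real,
      Real.norm_eq_abs, sq_abs, Real.sq_sqrt ht]
  have hm0 : ‖PowerSeries.coeff 0 (mPS l * a)‖ ^ 2
      = ‖l‖ ^ 2 * ‖PowerSeries.coeff 0 b‖ ^ 2 := by
    rw [hm, map_add, PowerSeries.coeff_C_mul]
    have : PowerSeries.coeff 0 (PowerSeries.X * b) = 0 := by
      rw [PowerSeries.coeff_zero_eq_constantCoeff, map_mul]
      simp
    rw [this, zero_add, norm_mul, mul_pow]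
  have hmsucc : ∀ m, PowerSeries.coeff (m+1) (mPS l * a)
      = PowerSeries.coeff m b + l * PowerSeries.coeff (m+1) b := by
    intro m
    rw [hm, map_add, PowerSeries.coeff_C_mul, PowerSeries.coeff_succ_X_mul]
  induction n with
  | zero =>
    rw [sum_range_one, sum_range_one, hg, hm0, coeff_zero_geom l a]
    have : PowerSeries.coeff 0 a = PowerSeries.coeff 0 b := (coeff_zero_geom l a).symm
    rw [this]; ring
  | succ n ih =>
    rw [sum_range_succ, sum_range_succ (f := fun k => ‖PowerSeries.coeff k a‖ ^ 2), ← ih]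
    rw [hg, hg, hmsucc, coeff_eq_geom l a n]
    have := sq_norm_identity l (PowerSeries.coeff (n+1) b) (PowerSeries.coeff n b)
    linarith

noncomputable def BPSpart (lam' : ℕ → ℂ) (j : ℕ) : PowerSeries ℂ := ∏ k ∈ range j, mPS (lam' k)

lemma scalar_main (lam' : ℕ → ℂ) (h : ∀ j, ‖lam' j‖ < 1) (d n : ℕ) :
    ∑ k ∈ range (n + 1), ‖PowerSeries.coeff k (BPSpart lam' d)‖ ^ 2
      = 1 - ∑ j ∈ range d, ‖PowerSeries.coeff n (gPS (lam' j) * BPSpart lam' j)‖ ^ 2 := by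
  induction d with
  | zero =>
    simp only [BPSpart, range_zero, prod_empty, sum_empty, sub_zero]
    rw [Finset.sum_eq_single 0]
    · simp
    · intro k _ hk
      rw [PowerSeries.coeff_one, if_neg hk]; simp
    · intro h0; exact absurd (mem_range.mpr (Nat.succ_pos n)) h0
  | succ d ih =>
    have hstep : BPSpart lam' (d+1) = mPS (lam' d) * BPSpart lam' d := by
      rw [BPSpart, prod_range_succ, mul_comm, BPSpart]
    rw [hstep, sum_range_succ (f := fun j => ‖PowerSeries.coeff n (gPS (lam' j) * BPSpart lam' j)‖ ^ 2)]
    have := key (lam' d) (h d) (BPSpart lam' d) n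
    linarith

/-! ### Power series as analytic functions -/

def Rp (P : PowerSeries ℂ) (g : ℂ → ℂ) : Prop :=
  ∀ z : ℂ, ‖z‖ < 1 →
    Summable (fun n => ‖PowerSeries.coeff n P * z ^ n‖)
      ∧ HasSum (fun n => PowerSeries.coeff n P * z ^ n) (g z)

lemma Rp.mul {P Q : PowerSeries ℂ} {g h : ℂ → ℂ} (hP : Rp P g) (hQ : Rp Q h) :
    Rp (P * Q) (fun z => g z * h z) := by
  intro z hz
  obtain ⟨hPs, hPsum⟩ := hP z hz
  obtain ⟨hQs, hQsum⟩ := hQ z hz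
  have hconv : ∀ n, PowerSeries.coeff n (P * Q) * z ^ n
      = ∑ kl ∈ antidiagonal n,
          (PowerSeries.coeff kl.1 P * z ^ kl.1) * (PowerSeries.coeff kl.2 Q * z ^ kl.2) := by
    intro n
    rw [PowerSeries.coeff_mul, Finset.sum_mul]
    refine Finset.sum_congr rfl fun kl hkl => ?_
    rw [Finset.HasAntidiagonal.mem_antidiagonal] at hkl
    rw [← hkl, pow_add]; ring
  have hsummable : Summable (fun n => ‖PowerSeries.coeff n (P * Q) * z ^ n‖) := by
    have := summable_norm_sum_mul_antidiagonal_of_summable_norm hPs hQs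
    simpa only [← hconv] using this
  refine ⟨hsummable, ?_⟩
  have hsum := tsum_mul_tsum_eq_tsum_sum_antidiagonal_of_summable_norm hPs hQs
  rw [hPsum.tsum_eq, hQsum.tsum_eq] at hsum
  rw [(hsummable.of_norm).hasSum_iff]
  simp only [hsum]
  exact tsum_congr hconv

lemma Rp.geom (l : ℂ) (hl : ‖l‖ < 1) :
    Rp (geomPS l) (fun z => (1 + (starRingEnd ℂ) l * z)⁻¹) := by
  intro z hz
  have hx : ‖-((starRingEnd ℂ) l * z)‖ < 1 := by
    rw [norm_neg, norm_mul, RCLike.norm_conj]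
    nlinarith [norm_nonneg l, norm_nonneg z]
  have hterm : ∀ n, PowerSeries.coeff n (geomPS l) * z ^ n
      = (-((starRingEnd ℂ) l * z)) ^ n := by
    intro n; rw [coeff_geomPS, ← mul_pow, neg_mul]
  constructor
  · refine Summable.congr ?_ (fun n => by rw [hterm])
    simpa only [norm_pow] using summable_geometric_of_lt_one (norm_nonneg _) hx
  · have := hasSum_geometric_of_norm_lt_one hx
    rw [sub_neg_eq_add] at this
    exact this.congr_fun fun n => (hterm n)

lemma Rp.const (c : ℂ) : Rp (PowerSeries.C c) (fun _ => c) := by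
  intro z _
  have hzero : ∀ n ∉ ({0} : Finset ℕ), PowerSeries.coeff n (PowerSeries.C c) * z ^ n = 0 := by
    intro n hn
    simp only [mem_singleton] at hn
    rw [PowerSeries.coeff_C, if_neg hn, zero_mul]
  constructor
  · exact summable_of_ne_finset_zero (s := {0}) fun n hn => by rw [hzero n hn, norm_zero]
  · have := hasSum_sum_of_ne_finset_zero (L := SummationFilter.unconditional ℕ) (s := {0}) hzero
    simpa using this

lemma Rp.XC (l : ℂ) : Rp (PowerSeries.X + PowerSeries.C l) (fun z => z + l) := by
  intro z _
  have hzero : ∀ n ∉ ({0, 1} : Finset ℕ),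
      PowerSeries.coeff n (PowerSeries.X + PowerSeries.C l) * z ^ n = 0 := by
    intro n hn
    simp only [mem_insert, mem_singleton] at hn
    push_neg at hn
    rw [map_add, PowerSeries.coeff_C, PowerSeries.coeff_X, if_neg hn.1, if_neg hn.2]
    simp
  constructor
  · exact summable_of_ne_finset_zero (s := {0, 1}) fun n hn => by rw [hzero n hn, norm_zero]
  · have := hasSum_sum_of_ne_finset_zero (L := SummationFilter.unconditional ℕ) (s := {0, 1}) hzero
    have h01 : ∑ n ∈ ({0, 1} : Finset ℕ),
        PowerSeries.coeff n (PowerSeries.X + PowerSeries.C l) * z ^ n = z + l := by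
      rw [Finset.sum_insert (by norm_num), Finset.sum_singleton]
      simp [PowerSeries.coeff_X, PowerSeries.coeff_C]
      ring
    rwa [h01] at this

lemma Rp.iteratedDeriv {P : PowerSeries ℂ} {g : ℂ → ℂ} (h : Rp P g) (n : ℕ) :
    iteratedDeriv n g 0 = (n.factorial : ℂ) * PowerSeries.coeff n P := by
  set p := FormalMultilinearSeries.ofScalars ℂ (fun k => PowerSeries.coeff k P) with hp
  have hrad : ((2⁻¹ : NNReal) : ENNReal) ≤ p.radius := by
    apply p.le_radius_of_summable
    have h2 : ‖(2⁻¹ : ℂ)‖ < 1 := by norm_num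
    have := (h (2⁻¹ : ℂ) h2).1
    refine this.congr fun n => ?_
    rw [norm_mul, norm_pow]
    rw [hp, FormalMultilinearSeries.ofScalars_norm]
    norm_num
  have hball : HasFPowerSeriesOnBall g p 0 ((2⁻¹ : NNReal) : ENNReal) := by
    refine ⟨hrad, by norm_num, ?_⟩
    intro y hy
    rw [mem_emetric_ball_zero_iff] at hy
    have hy1 : ‖y‖ < 1 := by
      have h1 : ‖y‖₊ < (2⁻¹ : NNReal) := by exact_mod_cast hy
      have h2 : ‖y‖ < (2⁻¹ : ℝ) := h1
      linarith
    have := (h y hy1).2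
    rw [zero_add]
    refine this.congr_fun fun k => ?_
    rw [hp, FormalMultilinearSeries.ofScalars_apply_eq, smul_eq_mul]
  have key := hball.factorial_smul 1 n
  rw [hp, FormalMultilinearSeries.ofScalars_apply_eq, one_pow, smul_eq_mul, mul_one] at key
  rw [iteratedDeriv_eq_iteratedFDeriv, ← key, nsmul_eq_mul]

/-! ### Named analytic functions -/

noncomputable def Fb (lam' : ℕ → ℂ) (j : ℕ) (z : ℂ) : ℂ :=
  ∏ k ∈ Finset.range j, ((z + lam' k) * (1 + (starRingEnd ℂ) (lam' k) * z)⁻¹)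

noncomputable def Fe (lam' : ℕ → ℂ) (j : ℕ) (z : ℂ) : ℂ :=
  (((Real.sqrt (1 - ‖lam' j‖ ^ 2) : ℝ) : ℂ) * (1 + (starRingEnd ℂ) (lam' j) * z)⁻¹) * Fb lam' j z

lemma Rp_Fb (lam' : ℕ → ℂ) (h : ∀ i, ‖lam' i‖ < 1) (j : ℕ) :
    Rp (BPSpart lam' j) (Fb lam' j) := by
  induction j with
  | zero =>
    have h1 : Rp 1 (fun _ => (1:ℂ)) := by
      have := Rp.const 1
      rwa [map_one] at this
    have hB : BPSpart lam' 0 = 1 := by rw [BPSpart, range_zero, prod_empty]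
    have hF : Fb lam' 0 = fun _ => (1:ℂ) := by
      funext z; rw [Fb, range_zero, prod_empty]
    rw [hB, hF]; exact h1
  | succ j ih =>
    have hP : BPSpart lam' (j+1) = BPSpart lam' j * mPS (lam' j) := prod_range_succ _ _
    have hF : Fb lam' (j+1) = fun z => Fb lam' j z *
        ((z + lam' j) * (1 + (starRingEnd ℂ) (lam' j) * z)⁻¹) := by
      funext z; exact prod_range_succ _ _
    rw [hP, hF]
    exact Rp.mul ih (Rp.mul (Rp.XC (lam' j)) (Rp.geom (lam' j) (h j)))

lemma Rp_Fe (lam' : ℕ → ℂ) (h : ∀ i, ‖lam' i‖ < 1) (j : ℕ) :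
    Rp (gPS (lam' j) * BPSpart lam' j) (Fe lam' j) := by
  have : Fe lam' j = fun z =>
      ((fun _ => ((Real.sqrt (1 - ‖lam' j‖ ^ 2) : ℝ) : ℂ)) z *
        (1 + (starRingEnd ℂ) (lam' j) * z)⁻¹) * Fb lam' j z := rfl
  rw [this, gPS]
  exact Rp.mul (Rp.mul (Rp.const _) (Rp.geom (lam' j) (h j))) (Rp_Fb lam' h j)

lemma prod_filter_lt {d : ℕ} (j : Fin d) (F : ℕ → ℂ) :
    ∏ k ∈ Finset.univ.filter (fun k : Fin d => k < j), F (k : ℕ)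
      = ∏ i ∈ Finset.range (j : ℕ), F i := by
  refine Finset.prod_nbij (fun k => (k : ℕ)) ?_ ?_ ?_ ?_
  · intro a ha
    rw [Finset.mem_filter] at ha
    rw [Finset.mem_range]
    exact ha.2
  · intro a _ b _ hab
    exact Fin.val_injective hab
  · intro i hi
    simp only [Finset.coe_range, Set.mem_Iio] at hi
    have hid : i < d := lt_trans hi j.isLt
    refine ⟨⟨i, hid⟩, ?_, rfl⟩
    simp only [Finset.coe_filter, Set.mem_setOf_eq, Finset.mem_univ, true_and]
    exact hi
  · intro a _; rfl

/-! ### Operator side -/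

section Op

variable {H : Type*} [NormedAddCommGroup H] [InnerProductSpace ℂ H] [CompleteSpace H]
  (V : H →L[ℂ] H) (f : H) (s : ℕ)

local notation "⟪" x ", " y "⟫" => @inner ℂ _ _ x y

noncomputable def Phi (P : PowerSeries ℂ) : H :=
  ∑ k ∈ Finset.range s, PowerSeries.coeff k P • (V ^ (s - 1 - k)) f

lemma Phi_add (P Q : PowerSeries ℂ) : Phi V f s (P + Q) = Phi V f s P + Phi V f s Q := by
  simp [Phi, add_smul, Finset.sum_add_distrib]

lemma Phi_Cmul (c : ℂ) (P : PowerSeries ℂ) :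
    Phi V f s (PowerSeries.C c * P) = c • Phi V f s P := by
  simp [Phi, PowerSeries.coeff_C_mul, mul_smul, Finset.smul_sum]

variable (hA : ContinuousLinearMap.adjoint V ∘L V = 1) (hAf : ContinuousLinearMap.adjoint V f = 0)
  (hfn : ‖f‖ = 1)

include hA in
lemma adjoint_pow_succ (m : ℕ) (x : H) :
    ContinuousLinearMap.adjoint V ((V ^ (m + 1)) x) = (V ^ m) x := by
  rw [pow_succ']
  have h1 : (V * V ^ m) x = V ((V ^ m) x) := rfl
  rw [h1]
  have := ContinuousLinearMap.ext_iff.mp hA ((V ^ m) x)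
  simpa using this

include hA hAf in
lemma adjoint_Phi (P : PowerSeries ℂ) :
    ContinuousLinearMap.adjoint V (Phi V f s P) = Phi V f s (PowerSeries.X * P) := by
  cases s with
  | zero => simp [Phi]
  | succ t =>
    rw [Phi, map_sum]
    simp only [map_smul]
    rw [Finset.sum_range_succ]
    have hlast : PowerSeries.coeff t P •
        ContinuousLinearMap.adjoint V ((V ^ (t + 1 - 1 - t)) f) = 0 := by
      have h0 : t + 1 - 1 - t = 0 := by omega
      rw [h0, pow_zero, ContinuousLinearMap.one_apply, hAf, smul_zero]
    rw [hlast, add_zero, Phi, Finset.sum_range_succ']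
    have h0 : PowerSeries.coeff 0 (PowerSeries.X * P) •
        (V ^ (t + 1 - 1 - 0)) f = 0 := by
      have : PowerSeries.coeff 0 (PowerSeries.X * P) = 0 := by
        rw [PowerSeries.coeff_zero_eq_constantCoeff, map_mul]
        simp
      rw [this, zero_smul]
    rw [h0, add_zero]
    refine Finset.sum_congr rfl fun k hk => ?_
    rw [mem_range] at hk
    rw [PowerSeries.coeff_succ_X_mul]
    congr 1
    have h1 : t + 1 - 1 - k = (t - 1 - k) + 1 := by omega
    have h2 : t + 1 - 1 - (k + 1) = t - 1 - k := by omega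
    rw [h1, h2, adjoint_pow_succ V hA]

include hA hAf in
lemma one_add_smul_adjoint_Phi (c : ℂ) (Q : PowerSeries ℂ) :
    ((1 : H →L[ℂ] H) + c • ContinuousLinearMap.adjoint V) (Phi V f s Q)
      = Phi V f s ((1 + PowerSeries.C c * PowerSeries.X) * Q) := by
  rw [ContinuousLinearMap.add_apply, ContinuousLinearMap.one_apply,
    ContinuousLinearMap.smul_apply, adjoint_Phi V f s hA hAf, ← Phi_Cmul V f s c,
    ← Phi_add, add_mul, one_mul, mul_assoc]

include hA hAf in
lemma factor_Phi (l : ℂ)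
    (hU : IsUnit ((1 : H →L[ℂ] H) + (starRingEnd ℂ) l • ContinuousLinearMap.adjoint V))
    (P : PowerSeries ℂ) :
    ((ContinuousLinearMap.adjoint V + l • (1 : H →L[ℂ] H)) *
        Ring.inverse ((1 : H →L[ℂ] H) + (starRingEnd ℂ) l • ContinuousLinearMap.adjoint V))
      (Phi V f s P) = Phi V f s (mPS l * P) := by
  set U := (1 : H →L[ℂ] H) + (starRingEnd ℂ) l • ContinuousLinearMap.adjoint V with hUdef
  have hinv : Ring.inverse U (Phi V f s P) = Phi V f s (geomPS l * P) := by
    have happ : U (Phi V f s (geomPS l * P)) = Phi V f s P := by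
      rw [hUdef, one_add_smul_adjoint_Phi V f s hA hAf, ← mul_assoc, one_add_mul_geomPS, one_mul]
    calc Ring.inverse U (Phi V f s P)
        = Ring.inverse U (U (Phi V f s (geomPS l * P))) := by rw [happ]
      _ = (Ring.inverse U * U) (Phi V f s (geomPS l * P)) := rfl
      _ = Phi V f s (geomPS l * P) := by rw [Ring.inverse_mul_cancel _ hU]; rfl
  rw [ContinuousLinearMap.mul_apply, hinv, ContinuousLinearMap.add_apply,
    ContinuousLinearMap.smul_apply, ContinuousLinearMap.one_apply,
    adjoint_Phi V f s hA hAf, ← Phi_Cmul V f s l, ← Phi_add, mPS, mul_assoc, add_mul]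

include hA hAf in
lemma list_Phi (L : List ℂ)
    (hU : ∀ x ∈ L, IsUnit ((1 : H →L[ℂ] H) + (starRingEnd ℂ) x • ContinuousLinearMap.adjoint V))
    (P : PowerSeries ℂ) :
    (L.map fun x => (ContinuousLinearMap.adjoint V + x • (1 : H →L[ℂ] H)) *
        Ring.inverse ((1 : H →L[ℂ] H) + (starRingEnd ℂ) x • ContinuousLinearMap.adjoint V)).prod
      (Phi V f s P) = Phi V f s ((L.map mPS).prod * P) := by
  induction L generalizing P with
  | nil => simp
  | cons x L ih =>
    rw [List.map_cons, List.prod_cons, List.map_cons, List.prod_cons,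
      ContinuousLinearMap.mul_apply, ih (fun y hy => hU y (List.mem_cons_of_mem x hy)) P,
      factor_Phi V f s hA hAf x (hU x List.mem_cons_self), mul_assoc]

include hA in
lemma inner_V (x y : H) : ⟪V x, V y⟫ = ⟪x, y⟫ := by
  rw [← ContinuousLinearMap.adjoint_inner_left]
  have hx : ContinuousLinearMap.adjoint V (V x) = x := by
    have := ContinuousLinearMap.ext_iff.mp hA x
    simpa using this
  rw [hx]

include hA in
lemma inner_V_pow (a : ℕ) (x y : H) : ⟪(V ^ a) x, (V ^ a) y⟫ = ⟪x, y⟫ := by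
  induction a with
  | zero => simp
  | succ a ih =>
    have hx : (V ^ (a + 1)) x = V ((V ^ a) x) := by rw [pow_succ']; rfl
    have hy : (V ^ (a + 1)) y = V ((V ^ a) y) := by rw [pow_succ']; rfl
    rw [hx, hy, inner_V V hA, ih]

include hA hAf hfn in
lemma inner_f_pow (m : ℕ) : ⟪f, (V ^ m) f⟫ = if m = 0 then 1 else 0 := by
  cases m with
  | zero =>
    simp only [pow_zero, ContinuousLinearMap.one_apply, if_pos rfl]
    rw [inner_self_eq_norm_sq_to_K, hfn]; norm_num
  | succ m =>
    have hx : (V ^ (m + 1)) f = V ((V ^ m) f) := by rw [pow_succ']; rfl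
    rw [hx, if_neg (Nat.succ_ne_zero m), ← ContinuousLinearMap.adjoint_inner_left, hAf,
      inner_zero_left]

include hA hAf hfn in
lemma onb : Orthonormal ℂ (fun k : ℕ => (V ^ k) f) := by
  rw [orthonormal_iff_ite]
  have haux : ∀ i j : ℕ, i ≤ j → ⟪(V ^ i) f, (V ^ j) f⟫ = if i = j then (1:ℂ) else 0 := by
    intro i j hij
    have hj : (V ^ j) f = (V ^ i) ((V ^ (j - i)) f) := by
      rw [← ContinuousLinearMap.mul_apply, ← pow_add]
      congr 2
      omega
    rw [hj, inner_V_pow V hA, inner_f_pow V f hA hAf hfn]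
    congr 1
    simp only [eq_iff_iff]
    omega
  intro i j
  rcases le_total i j with h | h
  · exact haux i j h
  · have h1 := haux j i h
    have hconj := congrArg (starRingEnd ℂ) h1
    rw [inner_conj_symm] at hconj
    rw [hconj]
    by_cases hij : i = j <;> simp [hij, eq_comm]

include hA hAf hfn in
lemma Phi_norm (P : PowerSeries ℂ) :
    ‖Phi V f s P‖ ^ 2 = ∑ k ∈ Finset.range s, ‖PowerSeries.coeff k P‖ ^ 2 := by
  have honb : Orthonormal ℂ (fun k : Fin s => (V ^ (s - 1 - (k : ℕ))) f) := by
    have hinj : Function.Injective (fun k : Fin s => s - 1 - (k : ℕ)) := by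
      intro a b hab
      have ha := a.isLt
      have hb := b.isLt
      ext
      simp only at hab
      omega
    exact (onb V f hA hAf hfn).comp _ hinj
  have hPhi : Phi V f s P
      = ∑ k : Fin s, PowerSeries.coeff (k : ℕ) P • (V ^ (s - 1 - (k : ℕ))) f := by
    rw [Phi, ← Fin.sum_univ_eq_sum_range (fun k => PowerSeries.coeff k P • (V ^ (s - 1 - k)) f) s]
  have hinner := honb.inner_sum (fun k : Fin s => PowerSeries.coeff (k : ℕ) P)
    (fun k : Fin s => PowerSeries.coeff (k : ℕ) P) Finset.univ
  have hns : (⟪Phi V f s P, Phi V f s P⟫ : ℂ) = ((‖Phi V f s P‖ : ℂ)) ^ 2 :=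
    inner_self_eq_norm_sq_to_K _
  rw [hPhi] at hns
  rw [hinner] at hns
  simp only [RCLike.conj_mul] at hns
  have hfin : ((‖Phi V f s P‖ : ℂ)) ^ 2
      = ((∑ k ∈ Finset.range s, ‖PowerSeries.coeff k P‖ ^ 2 : ℝ) : ℂ) := by
    rw [hPhi, ← hns, ← Fin.sum_univ_eq_sum_range (fun k => (‖PowerSeries.coeff k P‖ ^ 2 : ℝ)) s]
    push_cast
    rfl
  exact_mod_cast hfin

lemma Phi_one (hs : 0 < s) : Phi V f s 1 = (V ^ (s - 1)) f := by
  rw [Phi, Finset.sum_eq_single 0]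
  · rw [PowerSeries.coeff_one, if_pos rfl, one_smul, Nat.sub_zero]
  · intro k _ hk
    rw [PowerSeries.coeff_one, if_neg hk, zero_smul]
  · intro h0
    exact absurd (Finset.mem_range.mpr hs) h0

lemma isUnit_one_add (hV1 : ‖V‖ ≤ 1) (l : ℂ) (hl : ‖l‖ < 1) :
    IsUnit ((1 : H →L[ℂ] H) + (starRingEnd ℂ) l • ContinuousLinearMap.adjoint V) := by
  have hAn : ‖ContinuousLinearMap.adjoint V‖ = ‖V‖ :=
    LinearIsometryEquiv.norm_map
      (ContinuousLinearMap.adjoint : (H →L[ℂ] H) ≃ₗᵢ⋆[ℂ] (H →L[ℂ] H)) V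
  have hn : ‖-((starRingEnd ℂ) l • ContinuousLinearMap.adjoint V)‖ < 1 := by
    rw [norm_neg, norm_smul, RCLike.norm_conj, hAn]
    nlinarith [norm_nonneg V, norm_nonneg l]
  have := (Units.oneSub _ hn).isUnit
  simpa [Units.val_oneSub, sub_neg_eq_add] using this

end Op

end Stmt12Aux

open Stmt12Aux Finset in
theorem stmt12 {H : Type*} [NormedAddCommGroup H] [InnerProductSpace ℂ H] [CompleteSpace H]
    (V : H →L[ℂ] H) (hV : ∀ x, ‖V x‖ = ‖x‖) (d : ℕ) (lam : Fin d → ℂ)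
    (hlam : ∀ j, ‖lam j‖ < 1) (f : H)
    (hf : f ∈ LinearMap.ker (ContinuousLinearMap.adjoint V : H →ₗ[ℂ] H)) (hfn : ‖f‖ = 1)
    (s : ℕ) (hs : 0 < s) :
    ‖blaschkeOp V lam ((V ^ (s - 1)) f)‖ ^ 2 =
      1 - (1 / ((s - 1).factorial : ℝ) ^ 2) *
          ∑ j, ‖iteratedDeriv (s - 1) (mtFun lam j) 0‖ ^ 2 := by
  classical
  have hV1 : ‖V‖ ≤ 1 := V.opNorm_le_bound zero_le_one fun x => by rw [hV x, one_mul]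
  have hA : ContinuousLinearMap.adjoint V ∘L V = 1 :=
    (ContinuousLinearMap.norm_map_iff_adjoint_comp_self V).mp hV
  have hAf : ContinuousLinearMap.adjoint V f = 0 := hf
  set lam' : ℕ → ℂ := fun i => if h : i < d then lam ⟨i, h⟩ else 0 with hlam'def
  have hlam' : ∀ i, ‖lam' i‖ < 1 := by
    intro i
    rw [hlam'def]
    by_cases h : i < d
    · simpa [h] using hlam ⟨i, h⟩
    · simp [h]
  have hlam'eq : ∀ j : Fin d, lam' (j : ℕ) = lam j := by
    intro j
    rw [hlam'def]
    simp [j.isLt]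
  -- operator side
  have hBe : blaschkeOp V lam ((V ^ (s - 1)) f) = Phi V f s (BPSpart lam' d) := by
    have h1 : blaschkeOp V lam
        = ((List.ofFn lam).map fun x =>
            (ContinuousLinearMap.adjoint V + x • (1 : H →L[ℂ] H)) *
              Ring.inverse ((1 : H →L[ℂ] H) +
                (starRingEnd ℂ) x • ContinuousLinearMap.adjoint V)).prod := by
      rw [blaschkeOp, List.map_ofFn]
      rfl
    have hU : ∀ x ∈ List.ofFn lam,
        IsUnit ((1 : H →L[ℂ] H) + (starRingEnd ℂ) x • ContinuousLinearMap.adjoint V) := by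
      intro x hx
      rw [List.mem_ofFn] at hx
      obtain ⟨j, rfl⟩ := hx
      exact isUnit_one_add V hV1 (lam j) (hlam j)
    have h2 : ((List.ofFn lam).map mPS).prod = BPSpart lam' d := by
      rw [List.map_ofFn, List.prod_ofFn, BPSpart]
      rw [← Fin.prod_univ_eq_prod_range (fun i => mPS (lam' i)) d]
      exact Finset.prod_congr rfl fun j _ => by rw [Function.comp_apply, hlam'eq j]
    rw [h1, ← Phi_one V f s hs, list_Phi V f s hA hAf _ hU, h2, mul_one]
  have hnorm : ‖blaschkeOp V lam ((V ^ (s - 1)) f)‖ ^ 2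
      = ∑ k ∈ range s, ‖PowerSeries.coeff k (BPSpart lam' d)‖ ^ 2 := by
    rw [hBe, Phi_norm V f s hA hAf hfn]
  have hscal := scalar_main lam' hlam' d (s - 1)
  rw [show s - 1 + 1 = s by omega] at hscal
  -- derivative side
  have hderiv : ∀ j : Fin d, ‖iteratedDeriv (s - 1) (mtFun lam j) 0‖ ^ 2
      = (((s-1).factorial : ℝ)) ^ 2 *
        ‖PowerSeries.coeff (s - 1) (gPS (lam' (j : ℕ)) * BPSpart lam' (j : ℕ))‖ ^ 2 := by
    intro j
    have hmt : mtFun lam j = Fe lam' (j : ℕ) := by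
      funext z
      rw [mtFun, Fe, div_eq_mul_inv, hlam'eq j]
      congr 1
      rw [show Fb lam' (j : ℕ) z
            = ∏ i ∈ Finset.range (j : ℕ), ((z + lam' i) * (1 + (starRingEnd ℂ) (lam' i) * z)⁻¹)
          from rfl,
        ← prod_filter_lt j (fun i => (z + lam' i) * (1 + (starRingEnd ℂ) (lam' i) * z)⁻¹)]
      refine Finset.prod_congr rfl fun k hk => ?_
      rw [hlam'eq k, div_eq_mul_inv]
    rw [hmt, (Rp_Fe lam' hlam' (j : ℕ)).iteratedDeriv (s - 1), norm_mul, mul_pow]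
    congr 2
    simp
  have hsum : ∑ j : Fin d, ‖iteratedDeriv (s - 1) (mtFun lam j) 0‖ ^ 2
      = (((s-1).factorial : ℝ)) ^ 2 * ∑ j ∈ range d,
        ‖PowerSeries.coeff (s - 1) (gPS (lam' j) * BPSpart lam' j)‖ ^ 2 := by
    rw [Finset.mul_sum, ← Fin.sum_univ_eq_sum_range (fun j => (((s-1).factorial : ℝ)) ^ 2 *
      ‖PowerSeries.coeff (s - 1) (gPS (lam' j) * BPSpart lam' j)‖ ^ 2) d]
    exact Finset.sum_congr rfl fun j _ => hderiv j
  rw [hnorm, hscal, hsum]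
  have hfac : (((s-1).factorial : ℝ)) ≠ 0 := Nat.cast_ne_zero.mpr (Nat.factorial_ne_zero _)
  field_simp
end

section
/- Let H be an infinite-dimensional separable complex Hilbert space with orthonormal basis (e_m)_{m∈ℕ}, let V : H → H be a bounded linear operator that is an isometry, let λ_1, …, λ_d ∈ ℂ with |λ_j| < 1, define B(V*) := ∏_{j=1}^d (V* + λ_j·1)(1 + conj(λ_j)V*)⁻¹ and b_m := B(V*) e_m, and let E_j be the Malmquist–Takenaka functions of λ_1, …, λ_d. Fix k ∈ ℕ and suppose there exist a positive integer s and f ∈ ker(V*) with ‖f‖ = 1 such that e_k = V^{s-1} f. If the (s-1)-st iterated derivative D^{s-1}E_j(0) = 0 for every j = 1, …, d, then the vector b_k is essential: the closed linear span of {b_m : m ∈ ℕ, m ≠ k} is a proper subspace of H. -/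
set_option linter.unusedSectionVars false
set_option maxHeartbeats 1000000

open Polynomial PowerSeries in
/-- Iterated derivative at 0 of polynomial plus high-order remainder. -/
lemma aux_iteratedDeriv_poly_add (m : ℕ) :
    ∀ (k : ℕ) (P : Polynomial ℂ) (g : ℂ → ℂ), m < k → AnalyticAt ℂ g 0 →
    iteratedDeriv m (fun z : ℂ => P.eval z + z ^ k * g z) 0 = m.factorial * P.coeff m := by
  induction m with
  | zero =>
    intro k P g hk hg
    simp [iteratedDeriv_zero, zero_pow (by omega : k ≠ 0), Polynomial.coeff_zero_eq_eval_zero]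
  | succ m ih =>
    intro k P g hk hg
    rw [iteratedDeriv_succ']
    have hg' : ∀ᶠ z in nhds (0:ℂ), AnalyticAt ℂ g z := hg.eventually_analyticAt
    have hder : (deriv (fun z : ℂ => P.eval z + z ^ k * g z)) =ᶠ[nhds (0:ℂ)]
        (fun z : ℂ => (Polynomial.derivative P).eval z
          + z ^ (k-1) * ((k : ℂ) * g z + z * deriv g z)) := by
      filter_upwards [hg'] with z hz
      have h1 : HasDerivAt (fun z : ℂ => P.eval z + z ^ k * g z)
          (P.derivative.eval z + ((k:ℂ) * z ^ (k-1) * g z + z ^ k * deriv g z)) z :=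
        (P.hasDerivAt z).add ((hasDerivAt_pow k z).mul hz.differentiableAt.hasDerivAt)
      rw [h1.deriv]
      have hzk : z ^ k = z ^ (k-1) * z := by
        conv_lhs => rw [show k = (k-1)+1 by omega]
        rw [pow_succ]
      rw [hzk]; ring
    rw [hder.iteratedDeriv_eq m]
    have hdg : AnalyticAt ℂ (deriv g) 0 := by
      obtain ⟨U, hU0, hUan⟩ := hg'.exists_mem
      obtain ⟨t, htU, htopen, ht0⟩ := mem_nhds_iff.mp hU0
      exact (AnalyticOnNhd.deriv (fun z hz => hUan z (htU hz))) 0 ht0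
    have hg2 : AnalyticAt ℂ (fun z : ℂ => (k : ℂ) * g z + z * deriv g z) 0 :=
      (analyticAt_const.mul hg).add (analyticAt_id.mul hdg)
    rw [ih (k-1) P.derivative _ (by omega) hg2]
    rw [Polynomial.coeff_derivative]
    push_cast [Nat.factorial_succ]
    ring

open PowerSeries in
lemma aux_coeff_vanish {d : ℕ} (lam : Fin d → ℂ) (hlam : ∀ j, ‖lam j‖ < 1) (n : ℕ) (j : Fin d)
    (hder : iteratedDeriv n (mtFun lam j) 0 = 0) :
    PowerSeries.coeff n
      (PowerSeries.invOfUnit (1 + PowerSeries.C ((starRingEnd ℂ) (lam j)) * PowerSeries.X) 1 *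
        ∏ k ∈ Finset.univ.filter (fun k => k < j),
          (PowerSeries.X + PowerSeries.C (lam k)) *
            PowerSeries.invOfUnit (1 + PowerSeries.C ((starRingEnd ℂ) (lam k)) * PowerSeries.X) 1)
      = 0 := by
  classical
  set filt := Finset.univ.filter (fun k => k < j) with hfilt
  set c : ℂ := ((Real.sqrt (1 - ‖lam j‖ ^ 2) : ℝ) : ℂ) with hc
  have hc0 : c ≠ 0 := by
    have h1 : (0:ℝ) < 1 - ‖lam j‖ ^ 2 := by nlinarith [hlam j, norm_nonneg (lam j)]
    simp only [hc, ne_eq, Complex.ofReal_eq_zero]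
    positivity
  -- formal series pieces
  set psU : ℂ → PowerSeries ℂ := fun a => 1 + PowerSeries.C ((starRingEnd ℂ) a) * PowerSeries.X
    with hpsU
  have hconst : ∀ a : ℂ, constantCoeff (psU a) = ((1 : ℂˣ) : ℂ) := by
    intro a; simp [hpsU]
  have hinv : ∀ a : ℂ, psU a * PowerSeries.invOfUnit (psU a) 1 = 1 := fun a =>
    PowerSeries.mul_invOfUnit _ 1 (hconst a)
  set σ : PowerSeries ℂ := PowerSeries.C c *
    (PowerSeries.invOfUnit (psU (lam j)) 1 *
      ∏ k ∈ filt, (PowerSeries.X + PowerSeries.C (lam k)) *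
        PowerSeries.invOfUnit (psU (lam k)) 1) with hσ
  -- polynomials
  set ρ : Polynomial ℂ := Polynomial.C c * ∏ k ∈ filt, (Polynomial.X + Polynomial.C (lam k))
    with hρ
  set δ : Polynomial ℂ := (1 + Polynomial.C ((starRingEnd ℂ) (lam j)) * Polynomial.X) *
    ∏ k ∈ filt, (1 + Polynomial.C ((starRingEnd ℂ) (lam k)) * Polynomial.X) with hδ
  have hcoe : ∀ q : Polynomial ℂ, (↑q : PowerSeries ℂ) = Polynomial.coeToPowerSeries.ringHom q :=
    fun q => rfl
  have hδσ : (↑δ : PowerSeries ℂ) * σ = (↑ρ : PowerSeries ℂ) := by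
    rw [hcoe, hcoe, hδ, hρ]
    simp only [map_mul, map_prod, map_add, map_one, Polynomial.coeToPowerSeries.ringHom_apply,
      Polynomial.coe_C, Polynomial.coe_X]
    rw [hσ]
    have step1 : ((1 + PowerSeries.C ((starRingEnd ℂ) (lam j)) * PowerSeries.X) *
        ∏ k ∈ filt, (1 + PowerSeries.C ((starRingEnd ℂ) (lam k)) * PowerSeries.X)) *
        (PowerSeries.C c * (PowerSeries.invOfUnit (psU (lam j)) 1 *
          ∏ k ∈ filt, (PowerSeries.X + PowerSeries.C (lam k)) *
            PowerSeries.invOfUnit (psU (lam k)) 1)) =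
        PowerSeries.C c * ((psU (lam j) * PowerSeries.invOfUnit (psU (lam j)) 1) *
          ∏ k ∈ filt, (psU (lam k) *
            ((PowerSeries.X + PowerSeries.C (lam k)) *
              PowerSeries.invOfUnit (psU (lam k)) 1))) := by
      simp only [Finset.prod_mul_distrib, hpsU]
      ring
    rw [step1, hinv, one_mul]
    congr 1
    refine Finset.prod_congr rfl (fun k _ => ?_)
    rw [mul_left_comm, hinv, mul_one]
  set Q : Polynomial ℂ := PowerSeries.trunc (n+1) σ with hQ
  have hdvd1 : (PowerSeries.X : PowerSeries ℂ)^(n+1) ∣ (σ - ↑Q) := by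
    refine PowerSeries.X_pow_dvd_iff.mpr (fun m hm => ?_)
    rw [map_sub, Polynomial.coeff_coe, hQ, PowerSeries.coeff_trunc]
    simp [hm]
  have hdvd2 : (Polynomial.X : Polynomial ℂ)^(n+1) ∣ (ρ - Q * δ) := by
    refine Polynomial.X_pow_dvd_iff.mpr (fun m hm => ?_)
    have h1 : (↑(ρ - Q * δ) : PowerSeries ℂ) = (↑δ : PowerSeries ℂ) * (σ - ↑Q) := by
      have hQδ : (↑(Q*δ) : PowerSeries ℂ) = ↑Q * ↑δ := Polynomial.coe_mul _ _
      rw [Polynomial.coe_sub, ← hδσ, hQδ]; ring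
    have h2 : (PowerSeries.X : PowerSeries ℂ)^(n+1) ∣ (↑(ρ - Q*δ) : PowerSeries ℂ) := by
      rw [h1]; exact Dvd.dvd.mul_left hdvd1 _
    have h3 := PowerSeries.X_pow_dvd_iff.mp h2 m hm
    rwa [Polynomial.coeff_coe] at h3
  obtain ⟨S, hS⟩ := hdvd2
  have hSeq : ρ = Q * δ + Polynomial.X^(n+1) * S := by linear_combination hS
  have hδ0 : δ.eval 0 = 1 := by
    rw [hδ]
    simp [Polynomial.eval_prod]
  have hev : ∀ᶠ z in nhds (0:ℂ), δ.eval z ≠ 0 :=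
    (δ.continuous.continuousAt).eventually_ne (by rw [hδ0]; exact one_ne_zero)
  have hg : AnalyticAt ℂ (fun z => S.eval z / δ.eval z) 0 := by
    refine AnalyticAt.div ?_ ?_ (by rw [hδ0]; exact one_ne_zero)
    · exact (S.differentiable).analyticAt 0
    · exact (δ.differentiable).analyticAt 0
  have heq : (mtFun lam j) =ᶠ[nhds (0:ℂ)]
      (fun z => Q.eval z + z^(n+1) * (S.eval z / δ.eval z)) := by
    filter_upwards [hev] with z hz
    have hδz : δ.eval z = (1 + (starRingEnd ℂ) (lam j) * z) *
        ∏ k ∈ filt, (1 + (starRingEnd ℂ) (lam k) * z) := by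
      rw [hδ]
      simp [Polynomial.eval_prod]
    have hρz : ρ.eval z = c * ∏ k ∈ filt, (z + lam k) := by
      rw [hρ]
      simp [Polynomial.eval_prod]
    have hmt : mtFun lam j z = ρ.eval z / δ.eval z := by
      rw [mtFun, ← hfilt, hρz, hδz, Finset.prod_div_distrib, div_mul_div_comm]
    have hrz : ρ.eval z = Q.eval z * δ.eval z + z^(n+1) * S.eval z := by
      rw [hSeq]; simp
    rw [hmt, hrz]
    field_simp
  have h0 : (n.factorial : ℂ) * Q.coeff n = 0 := by
    rw [← aux_iteratedDeriv_poly_add n (n+1) Q (fun z => S.eval z / δ.eval z)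
      (Nat.lt_succ_self n) hg, ← heq.iteratedDeriv_eq n, hder]
  have hQc : Q.coeff n = 0 :=
    (mul_eq_zero.mp h0).resolve_left (Nat.cast_ne_zero.mpr n.factorial_ne_zero)
  have hQσ : Q.coeff n = PowerSeries.coeff n σ := by
    rw [hQ, PowerSeries.coeff_trunc]
    simp [Nat.lt_succ_self]
  have hfin : c * PowerSeries.coeff n
      (PowerSeries.invOfUnit (psU (lam j)) 1 *
        ∏ k ∈ filt, (PowerSeries.X + PowerSeries.C (lam k)) *
          PowerSeries.invOfUnit (psU (lam k)) 1) = 0 := by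
    rw [← PowerSeries.coeff_C_mul, ← hσ, ← hQσ, hQc]
  have := (mul_eq_zero.mp hfin).resolve_left hc0
  simpa only [hpsU] using this

section OpAux
noncomputable section
variable {H : Type*} [NormedAddCommGroup H] [InnerProductSpace ℂ H] [CompleteSpace H]

open ContinuousLinearMap

lemma aux_adjoint_comp (V : H →L[ℂ] H) (hV : ∀ x, ‖V x‖ = ‖x‖) (x : H) :
    ContinuousLinearMap.adjoint V (V x) = x := by
  have him : ∀ a b : H, (inner ℂ (V a) (V b) : ℂ) = inner ℂ a b := fun a b =>
    LinearIsometry.inner_map_map ⟨(V : H →ₗ[ℂ] H), hV⟩ a b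
  refine ext_inner_left ℂ fun y => ?_
  rw [ContinuousLinearMap.adjoint_inner_right]
  exact him y x

lemma aux_norm_V_le (V : H →L[ℂ] H) (hV : ∀ x, ‖V x‖ = ‖x‖) : ‖V‖ ≤ 1 :=
  V.opNorm_le_bound zero_le_one (fun x => by rw [hV x, one_mul])

lemma aux_norm_adj_le (V : H →L[ℂ] H) (hV : ∀ x, ‖V x‖ = ‖x‖) (x : H) :
    ‖ContinuousLinearMap.adjoint V x‖ ≤ ‖x‖ := by
  calc ‖ContinuousLinearMap.adjoint V x‖ ≤ ‖ContinuousLinearMap.adjoint V‖ * ‖x‖ :=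
        (ContinuousLinearMap.adjoint V).le_opNorm x
    _ ≤ 1 * ‖x‖ := by
        have h1 : ‖ContinuousLinearMap.adjoint V‖ = ‖V‖ := ContinuousLinearMap.adjoint.norm_map V
        rw [h1]
        exact mul_le_mul_of_nonneg_right (aux_norm_V_le V hV) (norm_nonneg x)
    _ = ‖x‖ := one_mul _

lemma aux_exists_unit (V : H →L[ℂ] H) (hV : ∀ x, ‖V x‖ = ‖x‖) (a : ℂ) (ha : ‖a‖ < 1) :
    ∃ u : (H →L[ℂ] H)ˣ, ((u : H →L[ℂ] H) = 1 + a • ContinuousLinearMap.adjoint V ∧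
      Ring.inverse (1 + a • ContinuousLinearMap.adjoint V) = ((u⁻¹ : (H →L[ℂ] H)ˣ) : H →L[ℂ] H)) := by
  have hn : ‖-(a • ContinuousLinearMap.adjoint V)‖ < 1 := by
    rw [norm_neg, norm_smul]
    calc ‖a‖ * ‖ContinuousLinearMap.adjoint V‖ ≤ ‖a‖ * 1 := by
          refine mul_le_mul_of_nonneg_left ?_ (norm_nonneg a)
          rw [ContinuousLinearMap.adjoint.norm_map V]
          exact aux_norm_V_le V hV
      _ < 1 := by rwa [mul_one]
  have hval : ((Units.oneSub _ hn : (H →L[ℂ] H)ˣ) : H →L[ℂ] H)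
      = 1 + a • ContinuousLinearMap.adjoint V := by
    rw [Units.val_oneSub, sub_neg_eq_add]
  exact ⟨Units.oneSub _ hn, hval, by rw [← hval, Ring.inverse_unit]⟩

lemma aux_defect (T : H →L[ℂ] H) (lm : ℂ) (y : H) :
    ‖T y + lm • y‖^2 = ‖y + (starRingEnd ℂ) lm • T y‖^2
      - (1 - ‖lm‖^2) * (‖y‖^2 - ‖T y‖^2) := by
  have h1 := @norm_add_sq ℂ _ _ _ _ (T y) (lm • y)
  have h2 := @norm_add_sq ℂ _ _ _ _ y (((starRingEnd ℂ) lm) • T y)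
  rw [inner_smul_right, norm_smul] at h1 h2
  have h3 : (RCLike.re (lm * (inner ℂ (T y) y : ℂ)) : ℝ)
      = RCLike.re ((starRingEnd ℂ) lm * (inner ℂ y (T y) : ℂ)) := by
    have h4 : lm * (inner ℂ (T y) y : ℂ)
        = (starRingEnd ℂ) ((starRingEnd ℂ) lm * (inner ℂ y (T y) : ℂ)) := by
      rw [map_mul, Complex.conj_conj, ← inner_conj_symm y (T y), Complex.conj_conj]
    rw [h4]
    exact (Complex.conj_re _).symm
  have hc : ‖(starRingEnd ℂ) lm‖ = ‖lm‖ := RCLike.norm_conj lm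
  rw [hc] at h2
  linear_combination h1 - h2 + 2 * h3

/-- Evaluation of a truncated power series on the orthonormal chain `V^i f`. -/
noncomputable def auxTheta (V : H →L[ℂ] H) (f : H) (n : ℕ) (p : PowerSeries ℂ) : H :=
  ∑ i ∈ Finset.range (n+1), (PowerSeries.coeff i p) • ((V ^ (n - i)) f)

lemma auxTheta_add (V : H →L[ℂ] H) (f : H) (n : ℕ) (p q : PowerSeries ℂ) :
    auxTheta V f n (p + q) = auxTheta V f n p + auxTheta V f n q := by
  simp [auxTheta, add_smul, Finset.sum_add_distrib]

lemma auxTheta_C_mul (V : H →L[ℂ] H) (f : H) (n : ℕ) (c : ℂ) (p : PowerSeries ℂ) :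
    auxTheta V f n (PowerSeries.C c * p) = c • auxTheta V f n p := by
  simp [auxTheta, Finset.smul_sum, smul_smul]

lemma auxTheta_one (V : H →L[ℂ] H) (f : H) (n : ℕ) :
    auxTheta V f n 1 = (V ^ n) f := by
  rw [auxTheta]
  rw [Finset.sum_eq_single 0]
  · simp
  · intro i _ hi; simp [PowerSeries.coeff_one, hi]
  · intro h; simp at h

lemma auxTheta_X_mul (V : H →L[ℂ] H) (hV : ∀ x, ‖V x‖ = ‖x‖) (f : H)
    (hfW : ContinuousLinearMap.adjoint V f = 0) (n : ℕ) (p : PowerSeries ℂ) :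
    auxTheta V f n (PowerSeries.X * p) = ContinuousLinearMap.adjoint V (auxTheta V f n p) := by
  rw [auxTheta, auxTheta, map_sum, Finset.sum_range_succ' _ n, Finset.sum_range_succ _ n]
  have h0 : (PowerSeries.coeff 0) (PowerSeries.X * p) • (V ^ (n - 0)) f = 0 := by
    rw [PowerSeries.coeff_zero_X_mul]; simp
  have hlast : ContinuousLinearMap.adjoint V
      ((PowerSeries.coeff n p) • (V ^ (n - n)) f) = 0 := by
    rw [Nat.sub_self, pow_zero, map_smul]
    simp [ContinuousLinearMap.one_apply, hfW]
  rw [h0, hlast, add_zero, add_zero]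
  refine Finset.sum_congr rfl (fun i hi => ?_)
  rw [Finset.mem_range] at hi
  rw [PowerSeries.coeff_succ_X_mul, map_smul]
  congr 1
  have hni : n - i = (n - (i+1)) + 1 := by omega
  rw [hni, pow_succ', ContinuousLinearMap.mul_apply, aux_adjoint_comp V hV]

lemma auxTheta_factor (V : H →L[ℂ] H) (f : H) (n : ℕ) (p : PowerSeries ℂ)
    (hc : PowerSeries.coeff n p = 0) :
    auxTheta V f n p = V (∑ i ∈ Finset.range n, (PowerSeries.coeff i p) • ((V ^ (n - 1 - i)) f)) := by
  rw [auxTheta, Finset.sum_range_succ, hc, zero_smul, add_zero, map_sum]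
  refine Finset.sum_congr rfl (fun i hi => ?_)
  rw [Finset.mem_range] at hi
  rw [map_smul]
  congr 1
  have hni : n - i = (n - 1 - i) + 1 := by omega
  rw [hni, pow_succ', ContinuousLinearMap.mul_apply]

lemma aux_step (V : H →L[ℂ] H) (hV : ∀ x, ‖V x‖ = ‖x‖) (f : H)
    (hfW : ContinuousLinearMap.adjoint V f = 0) (n : ℕ) (lm : ℂ) (hlm : ‖lm‖ < 1)
    (p : PowerSeries ℂ)
    (hc : PowerSeries.coeff n
      (PowerSeries.invOfUnit (1 + PowerSeries.C ((starRingEnd ℂ) lm) * PowerSeries.X) 1 * p)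
        = 0) :
    ((ContinuousLinearMap.adjoint V + lm • 1) *
        Ring.inverse (1 + (starRingEnd ℂ) lm • ContinuousLinearMap.adjoint V)) (auxTheta V f n p)
      = auxTheta V f n
        ((PowerSeries.X + PowerSeries.C lm) *
          PowerSeries.invOfUnit (1 + PowerSeries.C ((starRingEnd ℂ) lm) * PowerSeries.X) 1 * p)
    ∧ ‖((ContinuousLinearMap.adjoint V + lm • 1) *
        Ring.inverse (1 + (starRingEnd ℂ) lm • ContinuousLinearMap.adjoint V)) (auxTheta V f n p)‖^2
      = ‖auxTheta V f n p‖^2 := by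
  obtain ⟨u, huval, huinv⟩ := aux_exists_unit V hV ((starRingEnd ℂ) lm)
    (by rwa [RCLike.norm_conj])
  set W := ContinuousLinearMap.adjoint V with hW
  set ps1 : PowerSeries ℂ := 1 + PowerSeries.C ((starRingEnd ℂ) lm) * PowerSeries.X with hps1
  set q : PowerSeries ℂ := PowerSeries.invOfUnit ps1 1 * p with hq
  have hmul : ps1 * PowerSeries.invOfUnit ps1 1 = 1 :=
    PowerSeries.mul_invOfUnit _ 1 (by simp [hps1])
  have hps1q : ps1 * q = p := by rw [hq, ← mul_assoc, hmul, one_mul]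
  have hWq : auxTheta V f n (PowerSeries.X * q) = W (auxTheta V f n q) :=
    auxTheta_X_mul V hV f hfW n q
  have huapp : (u : H →L[ℂ] H) (auxTheta V f n q) = auxTheta V f n p := by
    rw [huval]
    have h1 : (1 + (starRingEnd ℂ) lm • W) (auxTheta V f n q)
        = auxTheta V f n q + (starRingEnd ℂ) lm • W (auxTheta V f n q) := by
      simp [ContinuousLinearMap.add_apply, ContinuousLinearMap.smul_apply,
        ContinuousLinearMap.one_apply]
    rw [h1, ← hWq, ← auxTheta_C_mul, ← auxTheta_add]
    congr 1
    rw [← hps1q, hps1]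
    ring
  have huinvapp : ((u⁻¹ : (H →L[ℂ] H)ˣ) : H →L[ℂ] H) (auxTheta V f n p) = auxTheta V f n q := by
    rw [← huapp, ← ContinuousLinearMap.mul_apply, Units.inv_mul, ContinuousLinearMap.one_apply]
  have happly : ((W + lm • 1) * Ring.inverse (1 + (starRingEnd ℂ) lm • W)) (auxTheta V f n p)
      = W (auxTheta V f n q) + lm • auxTheta V f n q := by
    rw [ContinuousLinearMap.mul_apply, huinv, huinvapp]
    simp [ContinuousLinearMap.add_apply, ContinuousLinearMap.smul_apply,
      ContinuousLinearMap.one_apply]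
  constructor
  · rw [happly, ← hWq, ← auxTheta_C_mul, ← auxTheta_add]
    congr 1
    rw [hq]
    ring
  · rw [happly]
    have hdef := aux_defect W lm (auxTheta V f n q)
    have hup : auxTheta V f n q + (starRingEnd ℂ) lm • W (auxTheta V f n q)
        = auxTheta V f n p := by
      rw [← huapp, huval]
      simp [ContinuousLinearMap.add_apply, ContinuousLinearMap.smul_apply,
        ContinuousLinearMap.one_apply]
    rw [hup] at hdef
    have hfac := auxTheta_factor V f n q hc
    have hzero : ‖auxTheta V f n q‖^2 - ‖W (auxTheta V f n q)‖^2 = 0 := by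
      rw [hfac, hW, aux_adjoint_comp V hV, hV]
      ring
    rw [hdef, hzero]
    ring

lemma aux_contraction (V : H →L[ℂ] H) (hV : ∀ x, ‖V x‖ = ‖x‖) (lm : ℂ) (hlm : ‖lm‖ < 1)
    (x : H) :
    ‖((ContinuousLinearMap.adjoint V + lm • 1) *
        Ring.inverse (1 + (starRingEnd ℂ) lm • ContinuousLinearMap.adjoint V)) x‖ ≤ ‖x‖ := by
  obtain ⟨u, huval, huinv⟩ := aux_exists_unit V hV ((starRingEnd ℂ) lm)
    (by rwa [RCLike.norm_conj])
  set W := ContinuousLinearMap.adjoint V with hW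
  set y : H := ((u⁻¹ : (H →L[ℂ] H)ˣ) : H →L[ℂ] H) x with hy
  have hxy : (u : H →L[ℂ] H) y = x := by
    rw [hy, ← ContinuousLinearMap.mul_apply, Units.mul_inv, ContinuousLinearMap.one_apply]
  have happly : ((W + lm • 1) * Ring.inverse (1 + (starRingEnd ℂ) lm • W)) x
      = W y + lm • y := by
    rw [ContinuousLinearMap.mul_apply, huinv, ← hy]
    simp [ContinuousLinearMap.add_apply, ContinuousLinearMap.smul_apply,
      ContinuousLinearMap.one_apply]
  have hup : y + (starRingEnd ℂ) lm • W y = x := by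
    rw [← hxy, huval]
    simp [ContinuousLinearMap.add_apply, ContinuousLinearMap.smul_apply,
      ContinuousLinearMap.one_apply]
  have hdef := aux_defect W lm y
  rw [hup] at hdef
  have hWy : ‖W y‖ ≤ ‖y‖ := aux_norm_adj_le V hV y
  have hsq : ‖((W + lm • 1) * Ring.inverse (1 + (starRingEnd ℂ) lm • W)) x‖^2 ≤ ‖x‖^2 := by
    rw [happly, hdef]
    have ha : ‖lm‖^2 ≤ 1 := by nlinarith [norm_nonneg lm]
    have hb : ‖W y‖^2 ≤ ‖y‖^2 := by nlinarith [norm_nonneg (W y), norm_nonneg y]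
    nlinarith [mul_nonneg (by linarith : (0:ℝ) ≤ 1 - ‖lm‖^2)
      (by linarith : (0:ℝ) ≤ ‖y‖^2 - ‖W y‖^2)]
  have h1 := (pow_le_pow_iff_left₀ (norm_nonneg _) (norm_nonneg x) (two_ne_zero)).mp hsq
  exact h1

end
end OpAux

section CommAux
variable {H : Type*} [NormedAddCommGroup H] [InnerProductSpace ℂ H] [CompleteSpace H]

lemma aux_commF(V : H →L[ℂ] H) (hV : ∀ x, ‖V x‖ = ‖x‖) (a b : ℂ) (ha : ‖a‖ < 1)
    (hb : ‖b‖ < 1) :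
    Commute
      ((ContinuousLinearMap.adjoint V + a • 1) *
        Ring.inverse (1 + (starRingEnd ℂ) a • ContinuousLinearMap.adjoint V))
      ((ContinuousLinearMap.adjoint V + b • 1) *
        Ring.inverse (1 + (starRingEnd ℂ) b • ContinuousLinearMap.adjoint V)) := by
  set W := ContinuousLinearMap.adjoint V with hW
  have c1 : ∀ p q : ℂ, Commute (W + p • 1) (W + q • (1 : H →L[ℂ] H)) := by
    intro p q
    refine Commute.add_left ?_ ?_
    · exact Commute.add_right (Commute.refl W) ((Commute.one_right W).smul_right q)
    · exact Commute.add_right ((Commute.one_left W).smul_left p)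
        (((Commute.one_left 1).smul_left p).smul_right q)
  have c2 : ∀ p q : ℂ, Commute (W + p • 1) (1 + q • W) := by
    intro p q
    refine Commute.add_left ?_ ?_
    · exact Commute.add_right (Commute.one_right W) ((Commute.refl W).smul_right q)
    · exact Commute.add_right ((Commute.one_left 1).smul_left p)
        (((Commute.one_left W).smul_left p).smul_right q)
  have c3 : ∀ p q : ℂ, Commute ((1 : H →L[ℂ] H) + p • W) (1 + q • W) := by
    intro p q
    refine Commute.add_left ?_ ?_
    · exact Commute.add_right (Commute.one_left 1) ((Commute.one_left W).smul_right q)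
    · exact Commute.add_right ((Commute.one_right W).smul_left p)
        (((Commute.refl W).smul_left p).smul_right q)
  obtain ⟨ua, hua, hua'⟩ := aux_exists_unit V hV ((starRingEnd ℂ) a) (by rwa [RCLike.norm_conj])
  obtain ⟨ub, hub, hub'⟩ := aux_exists_unit V hV ((starRingEnd ℂ) b) (by rwa [RCLike.norm_conj])
  rw [← hW] at hua hua' hub hub'
  rw [hua', hub']
  have k1 : Commute (W + a • 1) ((ub : H →L[ℂ] H)) := by rw [hub]; exact c2 a _
  have k2 : Commute (W + b • 1) ((ua : H →L[ℂ] H)) := by rw [hua]; exact c2 b _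
  have k3 : Commute ((ua : H →L[ℂ] H)) ((ub : H →L[ℂ] H)) := by rw [hua, hub]; exact c3 _ _
  have k4 : Commute (W + a • 1) ((ub⁻¹ : (H →L[ℂ] H)ˣ) : H →L[ℂ] H) := k1.units_inv_right
  have k5 : Commute ((ua⁻¹ : (H →L[ℂ] H)ˣ) : H →L[ℂ] H) (W + b • 1) :=
    (k2.units_inv_right).symm
  have k6 : Commute ((ua⁻¹ : (H →L[ℂ] H)ˣ) : H →L[ℂ] H)
      ((ub⁻¹ : (H →L[ℂ] H)ˣ) : H →L[ℂ] H) :=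
    ((k3.units_inv_right).symm.units_inv_right).symm
  exact Commute.mul_left (Commute.mul_right (c1 a b) k4) (Commute.mul_right k5 k6)
end CommAux

theorem stmt13 {H : Type*} [NormedAddCommGroup H] [InnerProductSpace ℂ H] [CompleteSpace H]
    (e : HilbertBasis ℕ ℂ H) (V : H →L[ℂ] H) (hV : ∀ x, ‖V x‖ = ‖x‖) (d : ℕ)
    (lam : Fin d → ℂ) (hlam : ∀ j, ‖lam j‖ < 1) (k : ℕ) (s : ℕ) (hs : 0 < s)
    (f : H) (hf : f ∈ LinearMap.ker (ContinuousLinearMap.adjoint V : H →ₗ[ℂ] H)) (hfn : ‖f‖ = 1)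
    (hek : e k = (V ^ (s - 1)) f)
    (hder : ∀ j, iteratedDeriv (s - 1) (mtFun lam j) 0 = 0) :
    (Submodule.span ℂ
        ((fun m => blaschkeOp V lam (e m)) '' {m : ℕ | m ≠ k})).topologicalClosure ≠ ⊤ := by
  classical
  have hfW : ContinuousLinearMap.adjoint V f = 0 := LinearMap.mem_ker.mp hf
  set n : ℕ := s - 1 with hn
  set Fop : Fin d → (H →L[ℂ] H) := fun j =>
    (ContinuousLinearMap.adjoint V + lam j • 1) *
      Ring.inverse (1 + (starRingEnd ℂ) (lam j) • ContinuousLinearMap.adjoint V) with hFop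
  have hBdef : blaschkeOp V lam = (List.ofFn Fop).prod := rfl
  set φs : Fin d → PowerSeries ℂ := fun j =>
    (PowerSeries.X + PowerSeries.C (lam j)) *
      PowerSeries.invOfUnit
        (1 + PowerSeries.C ((starRingEnd ℂ) (lam j)) * PowerSeries.X) 1 with hφs
  set π : ℕ → PowerSeries ℂ := fun m =>
    ∏ kk ∈ Finset.univ.filter (fun kk : Fin d => (kk : ℕ) < m), φs kk with hπ
  have hnormpow : ∀ m : ℕ, ‖(V ^ m) f‖ = 1 := by
    intro m; induction m with
    | zero => simpa using hfn
    | succ m ih => rw [pow_succ', ContinuousLinearMap.mul_apply, hV]; exact ih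
  have hek1 : ‖e k‖ = 1 := by rw [hek]; exact hnormpow _
  -- main induction
  have key : ∀ m : ℕ, m ≤ d →
      (((List.ofFn Fop).take m).reverse.prod) (e k) = auxTheta V f n (π m) ∧
      ‖(((List.ofFn Fop).take m).reverse.prod) (e k)‖^2 = 1 := by
    intro m
    induction m with
    | zero =>
      intro _
      have hπ0 : π 0 = 1 := by
        simp only [hπ]
        simp
      constructor
      · simp only [List.take_zero, List.reverse_nil, List.prod_nil,
          ContinuousLinearMap.one_apply]
        rw [hπ0, auxTheta_one]
        exact hek
      · simp only [List.take_zero, List.reverse_nil, List.prod_nil,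
          ContinuousLinearMap.one_apply]
        rw [hek1]; norm_num
    | succ m ih =>
      intro hm1
      have hm : m ≤ d := by omega
      obtain ⟨ih1, ih2⟩ := ih hm
      set jj : Fin d := ⟨m, by omega⟩ with hjj
      have htake : ((List.ofFn Fop).take (m+1)).reverse.prod
          = Fop jj * ((List.ofFn Fop).take m).reverse.prod := by
        have h1 : (List.ofFn Fop).take (m+1) = (List.ofFn Fop).take m ++ [Fop jj] := by
          rw [List.take_succ]
          congr 1
          have hlen : m < (List.ofFn Fop).length := by
            rw [List.length_ofFn]; omega
          rw [List.getElem?_eq_getElem hlen]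
          simp [List.getElem_ofFn, hjj]
        rw [h1, List.reverse_append]
        simp
      have hπstep : π (m+1) = φs jj * π m := by
        simp only [hπ]
        have hins : Finset.univ.filter (fun kk : Fin d => (kk:ℕ) < m+1)
            = insert jj (Finset.univ.filter (fun kk : Fin d => (kk:ℕ) < m)) := by
          ext x
          simp only [Finset.mem_filter, Finset.mem_univ, true_and, Finset.mem_insert,
            Fin.ext_iff, hjj]
          omega
        rw [hins, Finset.prod_insert (by simp [hjj])]
      have hcv : PowerSeries.coeff n
          (PowerSeries.invOfUnit
            (1 + PowerSeries.C ((starRingEnd ℂ) (lam jj)) * PowerSeries.X) 1 * π m) = 0 := by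
        have h := aux_coeff_vanish lam hlam n jj (hder jj)
        have hmatch : π m = ∏ kk ∈ Finset.univ.filter (fun kk => kk < jj),
            (PowerSeries.X + PowerSeries.C (lam kk)) *
              PowerSeries.invOfUnit
                (1 + PowerSeries.C ((starRingEnd ℂ) (lam kk)) * PowerSeries.X) 1 := by
          simp only [hπ, hφs]
          congr 1
        rw [hmatch]
        exact h
      have hstep := aux_step V hV f hfW n (lam jj) (hlam jj) (π m) hcv
      constructor
      · rw [htake, ContinuousLinearMap.mul_apply, ih1, hπstep]
        simp only [hFop]
        rw [hstep.1, hφs]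
      · rw [htake, ContinuousLinearMap.mul_apply, ih1]
        simp only [hFop]
        rw [hstep.2, ← ih1]
        exact ih2
  -- pairwise commutation, reverse product
  have hcommF : ∀ i j : Fin d, Commute (Fop i) (Fop j) := by
    intro i j
    simp only [hFop]
    exact aux_commF V hV (lam i) (lam j) (hlam i) (hlam j)
  have hrev : (List.ofFn Fop).reverse.prod = (List.ofFn Fop).prod := by
    refine (List.reverse_perm _).prod_eq' ?_
    rw [List.pairwise_reverse]
    refine List.pairwise_of_forall_mem_list (fun a ha b hb => ?_)
    rw [List.mem_ofFn] at ha hb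
    obtain ⟨i, rfl⟩ := ha
    obtain ⟨j, rfl⟩ := hb
    exact (hcommF j i)
  have htaked : (List.ofFn Fop).take d = List.ofFn Fop := by
    exact List.take_of_length_le (by rw [List.length_ofFn])
  have hw2 : ‖blaschkeOp V lam (e k)‖^2 = 1 := by
    rw [hBdef, ← hrev, ← htaked]
    exact (key d le_rfl).2
  -- contraction
  have hBcon : ∀ x, ‖blaschkeOp V lam x‖ ≤ ‖x‖ := by
    have hlist : ∀ (l : List (H →L[ℂ] H)), (∀ A ∈ l, ∀ x, ‖A x‖ ≤ ‖x‖) →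
        ∀ x, ‖l.prod x‖ ≤ ‖x‖ := by
      intro l
      induction l with
      | nil => intro _ x; simp
      | cons A t iht =>
        intro h x
        rw [List.prod_cons, ContinuousLinearMap.mul_apply]
        exact le_trans (h A (List.mem_cons_self (a := A) (l := t)) _)
          (iht (fun B hB => h B (List.mem_cons_of_mem A hB)) x)
    intro x
    rw [hBdef]
    refine hlist _ (fun A hA => ?_) x
    rw [List.mem_ofFn] at hA
    obtain ⟨j, rfl⟩ := hA
    simp only [hFop]
    exact fun y => aux_contraction V hV (lam j) (hlam j) y
  have hBnorm : ‖blaschkeOp V lam‖ ≤ 1 :=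
    (blaschkeOp V lam).opNorm_le_bound zero_le_one (fun x => by rw [one_mul]; exact hBcon x)
  have hadj : ∀ z : H, ‖ContinuousLinearMap.adjoint (blaschkeOp V lam) z‖ ≤ ‖z‖ := by
    intro z
    calc ‖ContinuousLinearMap.adjoint (blaschkeOp V lam) z‖
        ≤ ‖ContinuousLinearMap.adjoint (blaschkeOp V lam)‖ * ‖z‖ := ContinuousLinearMap.le_opNorm _ z
      _ ≤ 1 * ‖z‖ := by
          rw [ContinuousLinearMap.adjoint.norm_map]
          exact mul_le_mul_of_nonneg_right hBnorm (norm_nonneg z)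
      _ = ‖z‖ := one_mul _
  -- adjoint sends w back to e k
  set w : H := blaschkeOp V lam (e k) with hwdef
  have ha : ContinuousLinearMap.adjoint (blaschkeOp V lam) w = e k := by
    have h1 : (inner ℂ (ContinuousLinearMap.adjoint (blaschkeOp V lam) w) (e k) : ℂ)
        = inner ℂ w w := by
      rw [ContinuousLinearMap.adjoint_inner_left, ← hwdef]
    have hsub := @norm_sub_sq ℂ _ _ _ _
      (ContinuousLinearMap.adjoint (blaschkeOp V lam) w) (e k)
    have hre : RCLike.re (inner ℂ (ContinuousLinearMap.adjoint (blaschkeOp V lam) w) (e k) : ℂ)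
        = 1 := by
      rw [h1, inner_self_eq_norm_sq, hw2]
    have hle : ‖ContinuousLinearMap.adjoint (blaschkeOp V lam) w‖^2 ≤ 1 := by
      have := hadj w
      nlinarith [norm_nonneg (ContinuousLinearMap.adjoint (blaschkeOp V lam) w), hw2]
    have hzero : ‖ContinuousLinearMap.adjoint (blaschkeOp V lam) w - e k‖^2 ≤ 0 := by
      rw [hsub, hre, hek1]
      nlinarith
    have := sq_nonneg ‖ContinuousLinearMap.adjoint (blaschkeOp V lam) w - e k‖
    have hnz : ‖ContinuousLinearMap.adjoint (blaschkeOp V lam) w - e k‖^2 = 0 := le_antisymm hzero this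
    have := (pow_eq_zero_iff two_ne_zero).mp hnz
    rw [norm_eq_zero] at this
    exact sub_eq_zero.mp this
  -- orthogonality
  intro hT
  have horth : ∀ m : ℕ, m ≠ k → (inner ℂ (blaschkeOp V lam (e m)) w : ℂ) = 0 := by
    intro m hm
    have h2 : (inner ℂ (e m) (ContinuousLinearMap.adjoint (blaschkeOp V lam) w) : ℂ)
        = inner ℂ (blaschkeOp V lam (e m)) w :=
      ContinuousLinearMap.adjoint_inner_right _ _ _
    rw [← h2, ha]
    exact e.orthonormal.2 hm
  have hle2 : Submodule.span ℂ ((fun m => blaschkeOp V lam (e m)) '' {m : ℕ | m ≠ k})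
      ≤ (Submodule.span ℂ {w})ᗮ := by
    rw [Submodule.span_le]
    rintro u ⟨m, hm, rfl⟩
    rw [SetLike.mem_coe, Submodule.mem_orthogonal_singleton_iff_inner_left]
    exact horth m hm
  have hcl := Submodule.topologicalClosure_minimal _ hle2 (Submodule.isClosed_orthogonal _)
  rw [hT] at hcl
  have hwmem : w ∈ (Submodule.span ℂ {w})ᗮ := hcl Submodule.mem_top
  rw [Submodule.mem_orthogonal_singleton_iff_inner_left] at hwmem
  have : ‖w‖^2 = 0 := by
    rw [← inner_self_eq_norm_sq (𝕜 := ℂ), hwmem]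
    simp
  rw [hw2] at this
  exact one_ne_zero this
end

section
/- Let H be an infinite-dimensional separable complex Hilbert space with orthonormal basis (e_m)_{m∈ℕ}, let V : H → H be a bounded linear operator that is an isometry, let λ_1, …, λ_d ∈ ℂ with |λ_j| < 1, define B(V*) := ∏_{j=1}^d (V* + λ_j·1)(1 + conj(λ_j)V*)⁻¹ and b_m := B(V*) e_m, and let E_j be the Malmquist–Takenaka functions of λ_1, …, λ_d. Fix k ∈ ℕ and suppose there exist a positive integer s and f ∈ ker(V*) with ‖f‖ = 1 such that e_k = V^{s-1} f. If the (s-1)-st iterated derivative D^{s-1}E_j(0) ≠ 0 for at least one j ∈ {1, …, d}, then the vector b_k is redundant: there exist constants A, B > 0 such that A‖f‖² ≤ Σ_{m∈ℕ, m≠k} |⟨f, b_m⟩|² ≤ B‖f‖² for all f ∈ H, i.e. (b_m)_{m≠k} is still a frame for H. -/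
set_option linter.unusedSectionVars false

namespace Stmt14Aux

open ContinuousLinearMap

variable {H : Type*} [NormedAddCommGroup H] [InnerProductSpace ℂ H] [CompleteSpace H]
variable (V : H →L[ℂ] H)

local notation "⟪" x ", " y "⟫" => @inner ℂ _ _ x y

section Isom
variable (hV : ∀ x, ‖V x‖ = ‖x‖)
include hV

lemma normV : ‖V‖ ≤ 1 :=
  V.opNorm_le_bound zero_le_one (fun x => by rw [hV, one_mul])

lemma normVadj : ‖adjoint V‖ ≤ 1 := by
  rw [show adjoint V = ContinuousLinearMap.adjoint V from rfl]
  calc ‖ContinuousLinearMap.adjoint V‖ = ‖V‖ := by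
        exact (LinearIsometryEquiv.norm_map ContinuousLinearMap.adjoint V)
    _ ≤ 1 := normV V hV

lemma VadjV : ∀ x, adjoint V (V x) = x := by
  intro x
  have h := (V.norm_map_iff_adjoint_comp_self).mp hV
  calc adjoint V (V x) = (adjoint V ∘L V) x := rfl
    _ = x := by rw [h]; rfl

lemma innerVV (x y : H) : ⟪V x, V y⟫ = ⟪x, y⟫ := by
  have h := (V.norm_map_iff_adjoint_comp_self).mp hV
  rw [← adjoint_inner_left, show (adjoint V) (V x) = x from VadjV V hV x]

lemma innerPowPow (x y : H) (n : ℕ) : ⟪(V ^ n) x, (V ^ n) y⟫ = ⟪x, y⟫ := by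
  induction n with
  | zero => simp
  | succ n ih =>
    rw [pow_succ', ContinuousLinearMap.mul_apply, ContinuousLinearMap.mul_apply, innerVV V hV, ih]

lemma normPow (x : H) (n : ℕ) : ‖(V ^ n) x‖ = ‖x‖ := by
  induction n with
  | zero => simp
  | succ n ih => rw [pow_succ', ContinuousLinearMap.mul_apply, hV, ih]

end Isom

section KerF
variable (hV : ∀ x, ‖V x‖ = ‖x‖) {f : H} (hf : adjoint V f = 0) (hfn : ‖f‖ = 1)
include hV hf hfn

lemma inner_f_pow {m : ℕ} (hm : 0 < m) : ⟪f, (V ^ m) f⟫ = 0 := by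
  obtain ⟨m', rfl⟩ := Nat.exists_eq_succ_of_ne_zero hm.ne'
  rw [pow_succ', ContinuousLinearMap.mul_apply]
  rw [← inner_conj_symm, ← adjoint_inner_right, hf, inner_zero_right, map_zero]

lemma orthPow (a b : ℕ) : ⟪(V ^ a) f, (V ^ b) f⟫ = if a = b then (1 : ℂ) else 0 := by
  rcases le_or_gt a b with hab | hab
  · obtain ⟨m, rfl⟩ := Nat.exists_eq_add_of_le hab
    rw [pow_add, ContinuousLinearMap.mul_apply, innerPowPow V hV]
    rcases Nat.eq_zero_or_pos m with hm | hm
    · subst hm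
      simp [inner_self_eq_norm_sq_to_K, hfn]
    · rw [inner_f_pow V hV hf hfn hm, if_neg (by omega)]
  · rw [← inner_conj_symm]
    obtain ⟨m, rfl⟩ := Nat.exists_eq_add_of_le hab.le
    rw [pow_add, ContinuousLinearMap.mul_apply, innerPowPow V hV, inner_f_pow V hV hf hfn (by omega)]
    rw [if_neg (by omega), map_zero]

end KerF


section Factors
variable (hV : ∀ x, ‖V x‖ = ‖x‖)

/-- single factor -/
noncomputable def fac (μ : ℂ) : H →L[ℂ] H :=
  (adjoint V + μ • (1 : H →L[ℂ] H)) *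
    Ring.inverse ((1 : H →L[ℂ] H) + (starRingEnd ℂ) μ • adjoint V)

lemma isUnit_one_add {A : H →L[ℂ] H} (h : ‖A‖ < 1) : IsUnit ((1 : H →L[ℂ] H) + A) := by
  have h2 := (Units.oneSub (-A) (by simpa using h)).isUnit
  rwa [Units.val_oneSub, sub_neg_eq_add] at h2

include hV

lemma isUnit_u {μ : ℂ} (hμ : ‖μ‖ < 1) :
    IsUnit ((1 : H →L[ℂ] H) + (starRingEnd ℂ) μ • adjoint V) := by
  apply isUnit_one_add
  calc ‖(starRingEnd ℂ) μ • adjoint V‖ = ‖μ‖ * ‖adjoint V‖ := by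
        rw [norm_smul]; simp
    _ ≤ ‖μ‖ * 1 := by
        exact mul_le_mul_of_nonneg_left (normVadj V hV) (norm_nonneg μ)
    _ < 1 := by rwa [mul_one]

lemma isUnit_u' {μ : ℂ} (hμ : ‖μ‖ < 1) :
    IsUnit ((1 : H →L[ℂ] H) + μ • V) := by
  apply isUnit_one_add
  calc ‖μ • V‖ = ‖μ‖ * ‖V‖ := norm_smul _ _
    _ ≤ ‖μ‖ * 1 := mul_le_mul_of_nonneg_left (normV V hV) (norm_nonneg μ)
    _ < 1 := by rwa [mul_one]

/-- action of a factor on an eigenvector of `adjoint V`. -/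
lemma fac_eigen {μ lamj : ℂ} (hμ : ‖μ‖ < 1) (hl : ‖lamj‖ < 1) {w : H}
    (hw : adjoint V w = μ • w) :
    fac V lamj w = ((μ + lamj) * (1 + (starRingEnd ℂ) lamj * μ)⁻¹) • w := by
  set c : ℂ := 1 + (starRingEnd ℂ) lamj * μ with hc
  have hcne : c ≠ 0 := by
    intro h0
    have : ‖(starRingEnd ℂ) lamj * μ‖ < 1 := by
      rw [norm_mul]
      calc ‖(starRingEnd ℂ) lamj‖ * ‖μ‖ = ‖lamj‖ * ‖μ‖ := by simp
        _ ≤ 1 * ‖μ‖ := mul_le_mul_of_nonneg_right hl.le (norm_nonneg μ)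
        _ < 1 := by rwa [one_mul]
    have h1 : (starRingEnd ℂ) lamj * μ = -1 := by
      have := hc ▸ h0; linear_combination this
    rw [h1] at this; simp at this
  set u : H →L[ℂ] H := (1 : H →L[ℂ] H) + (starRingEnd ℂ) lamj • adjoint V with hu
  have hUnit : IsUnit u := isUnit_u V hV hl
  have huw : u w = c • w := by
    rw [hu, hc]
    simp only [add_apply, ContinuousLinearMap.one_apply, smul_apply, hw, smul_smul, add_smul, one_smul]
  have hinvw : Ring.inverse u w = c⁻¹ • w := by
    have h1 : Ring.inverse u (u w) = w := by
      rw [← ContinuousLinearMap.mul_apply, Ring.inverse_mul_cancel u hUnit, ContinuousLinearMap.one_apply]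
    rw [huw, map_smul] at h1
    calc Ring.inverse u w = c⁻¹ • (c • Ring.inverse u w) := (inv_smul_smul₀ hcne _).symm
      _ = c⁻¹ • w := by rw [h1]
  show (adjoint V + lamj • (1 : H →L[ℂ] H)) (Ring.inverse u w) = _
  rw [hinvw, map_smul, add_apply, hw, smul_apply, ContinuousLinearMap.one_apply, ← add_smul, smul_smul,
    mul_comm]

/-- the blaschke operator acting on an eigenvector. -/
lemma blaschke_eigen {μ : ℂ} (hμ : ‖μ‖ < 1) {w : H} (hw : adjoint V w = μ • w) :
    ∀ {d : ℕ} (lam : Fin d → ℂ), (∀ j, ‖lam j‖ < 1) →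
    blaschkeOp V lam w =
      (∏ j, (μ + lam j) * (1 + (starRingEnd ℂ) (lam j) * μ)⁻¹) • w := by
  intro d
  induction d with
  | zero => intro lam hlam; simp [blaschkeOp]
  | succ n ih =>
    intro lam hlam
    have hrw : blaschkeOp V lam = fac V (lam 0) * blaschkeOp V (fun i => lam i.succ) := by
      rw [blaschkeOp, List.ofFn_succ, List.prod_cons]
      rfl
    rw [hrw, ContinuousLinearMap.mul_apply, ih (fun i => lam i.succ) (fun i => hlam i.succ), map_smul,
      fac_eigen V hV hμ (hlam 0) hw, smul_smul, Fin.prod_univ_succ]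
    congr 1
    ring

/-- lower bound for the adjoint of a factor -/
lemma fac_adjoint_lower {lamj : ℂ} (hl : ‖lamj‖ < 1) (x : H) :
    (1 - ‖lamj‖) / (1 + ‖lamj‖) * ‖x‖ ≤ ‖adjoint (fac V lamj) x‖ := by
  have hpos : (0:ℝ) < 1 + ‖lamj‖ := by positivity
  set u' : H →L[ℂ] H := (1 : H →L[ℂ] H) + lamj • V with hu'
  have hadj : adjoint (fac V lamj) =
      Ring.inverse u' * (V + (starRingEnd ℂ) lamj • (1 : H →L[ℂ] H)) := by
    have h1 : star ((1 : H →L[ℂ] H) + (starRingEnd ℂ) lamj • adjoint V) = u' := by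
      rw [star_add, star_one, star_smul, star_eq_adjoint, adjoint_adjoint, hu']
      simp [Complex.star_def]
    have h2 : star (adjoint V + lamj • (1 : H →L[ℂ] H)) =
        V + (starRingEnd ℂ) lamj • (1 : H →L[ℂ] H) := by
      rw [star_add, star_smul, star_one, star_eq_adjoint, adjoint_adjoint]
      simp [Complex.star_def]
    rw [← star_eq_adjoint, fac, star_mul, ← Ring.inverse_star, h1, h2]
  set y : H := (V + (starRingEnd ℂ) lamj • (1 : H →L[ℂ] H)) x with hy
  have hyval : V x = y - (starRingEnd ℂ) lamj • x := by
    rw [hy, add_apply, smul_apply, ContinuousLinearMap.one_apply]; abel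
  have hnc : ‖(starRingEnd ℂ) lamj • x‖ = ‖lamj‖ * ‖x‖ := by
    rw [norm_smul]; simp
  have hylow : (1 - ‖lamj‖) * ‖x‖ ≤ ‖y‖ := by
    have h1 : ‖V x‖ ≤ ‖y‖ + ‖(starRingEnd ℂ) lamj • x‖ := by
      rw [hyval]; exact norm_sub_le _ _
    rw [hV, hnc] at h1
    nlinarith [norm_nonneg x]
  have hTx : adjoint (fac V lamj) x = Ring.inverse u' y := by rw [hadj, ContinuousLinearMap.mul_apply]
  have hyT : y = u' (adjoint (fac V lamj) x) := by
    rw [hTx, ← ContinuousLinearMap.mul_apply, Ring.mul_inverse_cancel u' (isUnit_u' V hV hl), ContinuousLinearMap.one_apply]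
  have hnu : ‖u'‖ ≤ 1 + ‖lamj‖ := by
    rw [hu']
    calc ‖(1 : H →L[ℂ] H) + lamj • V‖ ≤ ‖(1 : H →L[ℂ] H)‖ + ‖lamj • V‖ := norm_add_le _ _
      _ ≤ 1 + ‖lamj‖ := by
          gcongr
          · exact ContinuousLinearMap.norm_id_le
          · calc ‖lamj • V‖ = ‖lamj‖ * ‖V‖ := norm_smul _ _
              _ ≤ ‖lamj‖ * 1 := mul_le_mul_of_nonneg_left (normV V hV) (norm_nonneg _)
              _ = ‖lamj‖ := mul_one _
  have hyup : ‖y‖ ≤ (1 + ‖lamj‖) * ‖adjoint (fac V lamj) x‖ := by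
    calc ‖y‖ = ‖u' (adjoint (fac V lamj) x)‖ := by rw [← hyT]
      _ ≤ ‖u'‖ * ‖adjoint (fac V lamj) x‖ := le_opNorm _ _
      _ ≤ (1 + ‖lamj‖) * ‖adjoint (fac V lamj) x‖ :=
          mul_le_mul_of_nonneg_right hnu (norm_nonneg _)
  rw [div_mul_eq_mul_div, div_le_iff₀ hpos]
  nlinarith [norm_nonneg ((adjoint (fac V lamj)) x)]


/-- lower bound for the adjoint of the blaschke operator -/
lemma blaschke_adjoint_lower : ∀ {d : ℕ} (lam : Fin d → ℂ), (∀ j, ‖lam j‖ < 1) →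
    ∀ x : H, (∏ j, (1 - ‖lam j‖) / (1 + ‖lam j‖)) * ‖x‖ ≤ ‖adjoint (blaschkeOp V lam) x‖ := by
  intro d
  induction d with
  | zero =>
    intro lam hlam x
    simp [blaschkeOp, ← star_eq_adjoint]
  | succ n ih =>
    intro lam hlam x
    have hrw : blaschkeOp V lam = fac V (lam 0) * blaschkeOp V (fun i => lam i.succ) := by
      rw [blaschkeOp, List.ofFn_succ, List.prod_cons]; rfl
    have hadj : adjoint (blaschkeOp V lam) =
        adjoint (blaschkeOp V (fun i => lam i.succ)) ∘L adjoint (fac V (lam 0)) := by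
      rw [hrw]
      exact adjoint_comp _ _
    have hprodpos : ∀ m (mu : Fin m → ℂ), (∀ j, ‖mu j‖ < 1) →
        (0:ℝ) < ∏ j, (1 - ‖mu j‖) / (1 + ‖mu j‖) := by
      intro m mu hmu
      apply Finset.prod_pos
      intro j _
      have h1 := hmu j
      have h2 := norm_nonneg (mu j)
      exact div_pos (by linarith) (by linarith)
    rw [hadj]
    calc (∏ j, (1 - ‖lam j‖) / (1 + ‖lam j‖)) * ‖x‖
        = (∏ j : Fin n, (1 - ‖lam j.succ‖) / (1 + ‖lam j.succ‖)) *
            ((1 - ‖lam 0‖) / (1 + ‖lam 0‖) * ‖x‖) := by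
          rw [Fin.prod_univ_succ]; ring
      _ ≤ (∏ j : Fin n, (1 - ‖lam j.succ‖) / (1 + ‖lam j.succ‖)) *
            ‖adjoint (fac V (lam 0)) x‖ := by
          apply mul_le_mul_of_nonneg_left (fac_adjoint_lower V hV (hlam 0) x)
          exact (hprodpos n _ (fun j => hlam j.succ)).le
      _ ≤ ‖adjoint (blaschkeOp V (fun i => lam i.succ)) (adjoint (fac V (lam 0)) x)‖ :=
          ih _ (fun j => hlam j.succ) _
      _ = _ := rfl

end Factors

section Parseval
variable (e : HilbertBasis ℕ ℂ H)

lemma summable_coeff (x : H) : Summable (fun m => ‖⟪x, e m⟫‖ ^ 2) := by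
  have h := e.summable_inner_mul_inner x x
  have heq : ∀ m, ⟪x, e m⟫ * ⟪e m, x⟫ = ((‖⟪x, e m⟫‖ ^ 2 : ℝ) : ℂ) := by
    intro m
    rw [show ⟪x, e m⟫ = (starRingEnd ℂ) ⟪e m, x⟫ from (inner_conj_symm _ _).symm,
      RCLike.conj_mul]
    norm_cast
    rw [RCLike.norm_conj]
    norm_num
  rw [show (fun m => ⟪x, e m⟫ * ⟪e m, x⟫) = (fun m => ((‖⟪x, e m⟫‖ ^ 2 : ℝ) : ℂ)) from
    funext heq] at h
  exact Complex.summable_ofReal.mp h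

lemma parseval (x : H) : ∑' m, ‖⟪x, e m⟫‖ ^ 2 = ‖x‖ ^ 2 := by
  have h := e.tsum_inner_mul_inner x x
  have heq : ∀ m, ⟪x, e m⟫ * ⟪e m, x⟫ = ((‖⟪x, e m⟫‖ ^ 2 : ℝ) : ℂ) := by
    intro m
    rw [show ⟪x, e m⟫ = (starRingEnd ℂ) ⟪e m, x⟫ from (inner_conj_symm _ _).symm,
      RCLike.conj_mul]
    norm_cast
    rw [RCLike.norm_conj]
    norm_num
  rw [show (fun m => ⟪x, e m⟫ * ⟪e m, x⟫) = (fun m => ((‖⟪x, e m⟫‖ ^ 2 : ℝ) : ℂ)) from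
    funext heq, ← Complex.ofReal_tsum] at h
  have h2 : ⟪x, x⟫ = ((‖x‖ ^ 2 : ℝ) : ℂ) := by
    rw [inner_self_eq_norm_sq_to_K]; norm_cast
  rw [h2] at h
  exact_mod_cast h

end Parseval

section Split

lemma tsum_split {k : ℕ} (F : ℕ → ℝ) (hF : Summable F) :
    ∑' m : {m : ℕ // m ≠ k}, F m = (∑' m, F m) - F k := by
  have h1 : ∑' m, F m = F k + ∑' m, (if m = k then 0 else F m) := Summable.tsum_eq_add_tsum_ite hF k
  have h2 : ∑' m : {m : ℕ // m ≠ k}, F m = ∑' m, (if m = k then 0 else F m) := by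
    have h3 : ∑' m : {m : ℕ // m ≠ k}, F m = ∑' m : ({k}ᶜ : Set ℕ), F m := rfl
    rw [h3, tsum_subtype]
    apply tsum_congr
    intro m
    by_cases hm : m = k <;> simp [Set.indicator, hm]
  rw [h2]
  linarith

lemma iteratedDeriv_zero_fun' : ∀ n : ℕ, iteratedDeriv n (fun _ : ℂ => (0:ℂ)) = fun _ => 0 := by
  intro n
  induction n with
  | zero => simp [iteratedDeriv_zero]
  | succ n ih =>
    rw [iteratedDeriv_succ, ih]
    funext x
    simp

lemma iteratedDeriv_pow_eq_zero : ∀ n m : ℕ, m < n →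
    iteratedDeriv n (fun z : ℂ => z ^ m) = fun _ => 0 := by
  intro n
  induction n with
  | zero => omega
  | succ n ih =>
    intro m hm
    rw [iteratedDeriv_succ']
    have hder : deriv (fun z : ℂ => z ^ m) = fun z => (m : ℂ) * z ^ (m - 1) := by
      funext z
      exact deriv_pow_field m
    rw [hder]
    rcases Nat.eq_zero_or_pos m with h0 | h0
    · subst h0
      simpa using iteratedDeriv_zero_fun' n
    · have hsmul : (fun z : ℂ => (m : ℂ) * z ^ (m - 1)) = (m : ℂ) • (fun z : ℂ => z ^ (m - 1)) := by
        funext z; simp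
      rw [hsmul]
      have hcd : ContDiffOn ℂ n (fun z : ℂ => z ^ (m - 1)) Set.univ :=
        ((contDiff_id.pow (m - 1)).contDiffOn)
      funext x
      rw [← iteratedDerivWithin_univ,
        iteratedDerivWithin_const_smul (Set.mem_univ x) uniqueDiffOn_univ _ (hcd.contDiffWithinAt (Set.mem_univ x)),
        iteratedDerivWithin_univ, ih (m - 1) (by omega)]
      simp

end Split


section Witness
variable (hV : ∀ x, ‖V x‖ = ‖x‖) {f : H} (hf : adjoint V f = 0) (hfn : ‖f‖ = 1)
include hV hf hfn

lemma witness_case1 {d : ℕ} (lam : Fin d → ℂ) (hlam : ∀ j, ‖lam j‖ < 1)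
    (j0 : Fin d) (hj0 : lam j0 ≠ 0) (t : ℕ) :
    ∃ w : H, blaschkeOp V lam w = 0 ∧ ⟪(V ^ t) f, w⟫ ≠ 0 := by
  set μ : ℂ := -lam j0 with hμdef
  have hμ : ‖μ‖ < 1 := by rw [hμdef, norm_neg]; exact hlam j0
  have hμne : μ ≠ 0 := by simpa [hμdef] using hj0
  have hsum : Summable (fun n : ℕ => μ ^ n • (V ^ n) f) := by
    apply Summable.of_norm
    have heq : ∀ n : ℕ, ‖μ ^ n • (V ^ n) f‖ = ‖μ‖ ^ n := by
      intro n
      rw [norm_smul, norm_pow, normPow V hV, hfn, mul_one]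
    rw [funext heq]
    exact summable_geometric_of_lt_one (norm_nonneg μ) hμ
  set w : H := ∑' n : ℕ, μ ^ n • (V ^ n) f with hwdef
  set G : ℕ → H := fun n => Nat.casesOn n (0 : H) (fun m => μ ^ (m + 1) • (V ^ m) f) with hG
  have hterm : ∀ n : ℕ, adjoint V (μ ^ n • (V ^ n) f) = G n := by
    intro n
    cases n with
    | zero => show adjoint V ((1:ℂ) • (V ^ 0) f) = (0 : H); simp [hf]
    | succ m =>
      show adjoint V (μ ^ (m + 1) • (V ^ (m + 1)) f) = μ ^ (m + 1) • (V ^ m) f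
      rw [map_smul, pow_succ' V m, ContinuousLinearMap.mul_apply, VadjV V hV]
  have hGsum : Summable G := by
    have h := hsum.map (adjoint V : H →L[ℂ] H) (adjoint V).continuous
    rwa [show (⇑(adjoint V) ∘ fun n => μ ^ n • (V ^ n) f) = G from funext hterm] at h
  have hVw : adjoint V w = μ • w := by
    rw [hwdef, (adjoint V).map_tsum hsum]
    rw [tsum_congr hterm, Summable.tsum_eq_zero_add hGsum,
      show G 0 = 0 from rfl, zero_add]
    have h4 : ∀ m : ℕ, G (m + 1) = μ • (μ ^ m • (V ^ m) f) := by
      intro m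
      show μ ^ (m + 1) • (V ^ m) f = _
      rw [smul_smul, pow_succ' μ m]
    rw [tsum_congr h4, Summable.tsum_const_smul μ hsum]
  have hBw : blaschkeOp V lam w = 0 := by
    rw [blaschke_eigen V hV hμ hVw lam hlam]
    have : (∏ j, (μ + lam j) * (1 + (starRingEnd ℂ) (lam j) * μ)⁻¹) = 0 := by
      apply Finset.prod_eq_zero (Finset.mem_univ j0)
      rw [hμdef]
      simp
    rw [this, zero_smul]
  refine ⟨w, hBw, ?_⟩
  have hin : ⟪(V ^ t) f, w⟫ = μ ^ t := by
    have h1 : ⟪(V ^ t) f, w⟫ = ∑' n : ℕ, ⟪(V ^ t) f, μ ^ n • (V ^ n) f⟫ := by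
      rw [hwdef, ← innerSL_apply_apply (𝕜 := ℂ), (innerSL ℂ ((V ^ t) f)).map_tsum hsum]
      rfl
    rw [h1]
    have h2 : ∀ n : ℕ, ⟪(V ^ t) f, μ ^ n • (V ^ n) f⟫ = if n = t then μ ^ t else 0 := by
      intro n
      rw [inner_smul_right, orthPow V hV hf hfn t n]
      by_cases h : t = n
      · subst h; simp
      · rw [if_neg h, if_neg (fun hh => h hh.symm), mul_zero]
    rw [tsum_congr h2, tsum_ite_eq t (fun _ => μ ^ t)]
  rw [hin]
  exact pow_ne_zero t hμne

omit hf hfn in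
lemma pow_adjoint_pow (n : ℕ) (x : H) : ((adjoint V) ^ n) ((V ^ n) x) = x := by
  induction n with
  | zero => simp
  | succ n ih =>
    rw [pow_succ (adjoint V), ContinuousLinearMap.mul_apply, pow_succ' V, ContinuousLinearMap.mul_apply, VadjV V hV, ih]

lemma witness_case2 {d : ℕ} (lam : Fin d → ℂ) (h0 : ∀ j, lam j = 0)
    {s : ℕ} (hs : 0 < s) (hsd : s ≤ d) :
    blaschkeOp V lam ((V ^ (s - 1)) f) = 0 := by
  have hlam0 : lam = fun _ => 0 := funext h0
  have hB : blaschkeOp V lam = (adjoint V) ^ d := by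
    rw [hlam0, blaschkeOp]
    have hfac : (fun j : Fin d => (adjoint V + (0:ℂ) • (1 : H →L[ℂ] H)) *
        Ring.inverse ((1 : H →L[ℂ] H) + (starRingEnd ℂ) (0:ℂ) • adjoint V))
        = fun _ : Fin d => adjoint V := by
      funext j
      simp
    rw [hfac, List.ofFn_const, List.prod_replicate]
  rw [hB]
  have hd : d = (d - s + 1) + (s - 1) := by omega
  rw [hd, pow_add, ContinuousLinearMap.mul_apply, pow_adjoint_pow V hV, show d - s + 1 = (d - s) + 1 from rfl,
    pow_succ, ContinuousLinearMap.mul_apply, hf, map_zero]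

end Witness

lemma case2_sle {d : ℕ} (lam : Fin d → ℂ) (h0 : ∀ j, lam j = 0)
    {s : ℕ} (hs : 0 < s) (hder : ∃ j, iteratedDeriv (s - 1) (mtFun lam j) 0 ≠ 0) :
    s ≤ d := by
  obtain ⟨j, hj⟩ := hder
  by_contra hcon
  push_neg at hcon
  apply hj
  have hm : mtFun lam j = fun z => z ^ (j : ℕ) := by
    funext z
    rw [mtFun]
    have hfac : ∀ x ∈ Finset.univ.filter (fun k => k < j),
        (z + lam x) / (1 + (starRingEnd ℂ) (lam x) * z) = z := by
      intro x _
      simp [h0]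
    rw [Finset.prod_congr rfl hfac, Finset.prod_const]
    have hcard : (Finset.univ.filter (fun k => k < j)).card = (j : ℕ) := by
      rw [show Finset.univ.filter (fun k => k < j) = Finset.Iio j from by ext x; simp]
      exact Fin.card_Iio j
    rw [hcard]
    simp [h0]
  rw [hm, iteratedDeriv_pow_eq_zero (s - 1) (j : ℕ) (by have := j.isLt; omega)]

end Stmt14Aux


theorem stmt14 {H : Type*} [NormedAddCommGroup H] [InnerProductSpace ℂ H] [CompleteSpace H]
    (e : HilbertBasis ℕ ℂ H) (V : H →L[ℂ] H) (hV : ∀ x, ‖V x‖ = ‖x‖) (d : ℕ)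
    (lam : Fin d → ℂ) (hlam : ∀ j, ‖lam j‖ < 1) (k : ℕ) (s : ℕ) (hs : 0 < s)
    (f : H) (hf : f ∈ LinearMap.ker ((ContinuousLinearMap.adjoint V : H →L[ℂ] H) : H →ₗ[ℂ] H)) (hfn : ‖f‖ = 1)
    (hek : e k = (V ^ (s - 1)) f)
    (hder : ∃ j, iteratedDeriv (s - 1) (mtFun lam j) 0 ≠ 0) :
    ∃ A B : ℝ, 0 < A ∧ 0 < B ∧ ∀ g : H,
      A * ‖g‖ ^ 2 ≤
          ∑' m : {m : ℕ // m ≠ k}, ‖(inner ℂ g (blaschkeOp V lam (e m)) : ℂ)‖ ^ 2 ∧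
        ∑' m : {m : ℕ // m ≠ k}, ‖(inner ℂ g (blaschkeOp V lam (e m)) : ℂ)‖ ^ 2 ≤
          B * ‖g‖ ^ 2 := by
  classical
  have hfker : ContinuousLinearMap.adjoint V f = 0 := hf
  set Bop := blaschkeOp V lam with hBop
  set T := ContinuousLinearMap.adjoint Bop with hT
  -- the witness vector
  obtain ⟨w, hBw, hcw⟩ : ∃ w : H, Bop w = 0 ∧ (inner ℂ (e k) w : ℂ) ≠ 0 := by
    by_cases hcase : ∃ j0, lam j0 ≠ 0
    · obtain ⟨j0, hj0⟩ := hcase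
      obtain ⟨w, h1, h2⟩ := Stmt14Aux.witness_case1 V hV hfker hfn lam hlam j0 hj0 (s - 1)
      exact ⟨w, h1, by rwa [hek]⟩
    · push_neg at hcase
      have hsd : s ≤ d := Stmt14Aux.case2_sle lam hcase hs hder
      refine ⟨e k, by rw [hek]; exact Stmt14Aux.witness_case2 V hV hfker hfn lam hcase hs hsd, ?_⟩
      rw [inner_self_eq_norm_sq_to_K, hek, Stmt14Aux.normPow V hV, hfn]
      norm_num
  have hwne : w ≠ 0 := by
    intro h0
    apply hcw
    rw [h0, inner_zero_right]
  have hwpos : (0:ℝ) < ‖w‖ := norm_pos_iff.mpr hwne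
  set c : ℂ := inner ℂ w (e k) with hc
  have hcconj : (inner ℂ (e k) w : ℂ) = (starRingEnd ℂ) c := (inner_conj_symm _ _).symm
  have hcne : c ≠ 0 := by
    intro h0
    apply hcw
    rw [hcconj, h0, map_zero]
  have hcpos : (0:ℝ) < ‖c‖ := norm_pos_iff.mpr hcne
  set δ : ℝ := ‖c‖ ^ 2 / ‖w‖ ^ 2 with hδ
  have hδpos : (0:ℝ) < δ := by positivity
  have hnormek : ‖e k‖ = 1 := by rw [hek, Stmt14Aux.normPow V hV, hfn]
  set t : ℂ := c / ((‖w‖ ^ 2 : ℝ) : ℂ) with ht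
  set v : H := e k - t • w with hv
  have hvnorm : ‖v‖ ^ 2 = 1 - δ := by
    have h1 : (inner ℂ (e k) (t • w) : ℂ) = ((δ : ℝ) : ℂ) := by
      rw [inner_smul_right, hcconj, ht, div_mul_eq_mul_div, Complex.mul_conj,
        Complex.normSq_eq_norm_sq, hδ]
      push_cast
      rfl
    have hnt : ‖t‖ = ‖c‖ / ‖w‖ ^ 2 := by
      rw [ht, norm_div]
      congr 1
      rw [Complex.norm_real]
      exact Real.norm_of_nonneg (by positivity)
    have h2 : ‖t • w‖ ^ 2 = δ := by
      rw [norm_smul, hnt, hδ]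
      field_simp
    rw [hv, norm_sub_sq (𝕜 := ℂ), hnormek, h1, h2]
    have : RCLike.re ((δ : ℝ) : ℂ) = δ := by
      simp [RCLike.ofReal_re]
    rw [this]
    ring
  set α : ℝ := ∏ j, (1 - ‖lam j‖) / (1 + ‖lam j‖) with hα
  have hαpos : (0:ℝ) < α := by
    apply Finset.prod_pos
    intro j _
    have h1 := hlam j
    have h2 := norm_nonneg (lam j)
    exact div_pos (by linarith) (by linarith)
  refine ⟨δ * α ^ 2, ‖T‖ ^ 2 + 1, by positivity, by positivity, fun g => ?_⟩
  set h : H := T g with hh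
  have hterm : ∀ m : ℕ, (inner ℂ g (Bop (e m)) : ℂ) = inner ℂ h (e m) := by
    intro m
    rw [hh, hT]
    exact (ContinuousLinearMap.adjoint_inner_left Bop (e m) g).symm
  set F : ℕ → ℝ := fun m => ‖(inner ℂ h (e m) : ℂ)‖ ^ 2 with hF
  have hFsum : Summable F := Stmt14Aux.summable_coeff e h
  have hsplit : ∑' m : {m : ℕ // m ≠ k}, F m = (∑' m, F m) - F k := Stmt14Aux.tsum_split F hFsum
  have hpars : ∑' m, F m = ‖h‖ ^ 2 := Stmt14Aux.parseval e h
  have hworth : (inner ℂ h w : ℂ) = 0 := by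
    rw [hh, hT, ContinuousLinearMap.adjoint_inner_left Bop w g, hBw, inner_zero_right]
  have hhek : (inner ℂ h (e k) : ℂ) = inner ℂ h v := by
    rw [hv, inner_sub_right, inner_smul_right, hworth, mul_zero, sub_zero]
  have hFk : F k ≤ (1 - δ) * ‖h‖ ^ 2 := by
    have h1 : ‖(inner ℂ h v : ℂ)‖ ≤ ‖h‖ * ‖v‖ := norm_inner_le_norm h v
    have h2 : F k = ‖(inner ℂ h v : ℂ)‖ ^ 2 := by
      show ‖(inner ℂ h (e k) : ℂ)‖ ^ 2 = _
      rw [hhek]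
    rw [h2]
    calc ‖(inner ℂ h v : ℂ)‖ ^ 2 ≤ (‖h‖ * ‖v‖) ^ 2 :=
          pow_le_pow_left₀ (norm_nonneg _) h1 2
      _ = ‖v‖ ^ 2 * ‖h‖ ^ 2 := by ring
      _ = (1 - δ) * ‖h‖ ^ 2 := by rw [hvnorm]
  have hFknn : (0:ℝ) ≤ F k := sq_nonneg _
  have hlow : α * ‖g‖ ≤ ‖h‖ := by
    rw [hh, hT, hBop, hα]
    exact Stmt14Aux.blaschke_adjoint_lower V hV lam hlam g
  have hsq : α ^ 2 * ‖g‖ ^ 2 ≤ ‖h‖ ^ 2 := by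
    have := pow_le_pow_left₀ (by positivity) hlow 2
    calc α ^ 2 * ‖g‖ ^ 2 = (α * ‖g‖) ^ 2 := by ring
      _ ≤ ‖h‖ ^ 2 := this
  have hup : ‖h‖ ≤ ‖T‖ * ‖g‖ := ContinuousLinearMap.le_opNorm T g
  have hup2 : ‖h‖ ^ 2 ≤ ‖T‖ ^ 2 * ‖g‖ ^ 2 := by
    have := pow_le_pow_left₀ (norm_nonneg _) hup 2
    calc ‖h‖ ^ 2 ≤ (‖T‖ * ‖g‖) ^ 2 := this
      _ = ‖T‖ ^ 2 * ‖g‖ ^ 2 := by ring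
  have hgoal : (∑' m : {m : ℕ // m ≠ k}, ‖(inner ℂ g (Bop (e m)) : ℂ)‖ ^ 2) = ‖h‖ ^ 2 - F k := by
    have hcong : ∀ m : {m : ℕ // m ≠ k}, ‖(inner ℂ g (Bop (e m)) : ℂ)‖ ^ 2 = F (m : ℕ) := by
      intro m
      rw [hF, hterm (m : ℕ)]
    rw [tsum_congr hcong, hsplit, hpars]
  rw [hgoal]
  constructor
  · have e0 : δ * α ^ 2 * ‖g‖ ^ 2 = δ * (α ^ 2 * ‖g‖ ^ 2) := by ring
    have e1 : δ * ‖h‖ ^ 2 = ‖h‖ ^ 2 - (1 - δ) * ‖h‖ ^ 2 := by ring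
    linarith [mul_le_mul_of_nonneg_left hsq hδpos.le, hFk]
  · have e2 : (‖T‖ ^ 2 + 1) * ‖g‖ ^ 2 = ‖T‖ ^ 2 * ‖g‖ ^ 2 + ‖g‖ ^ 2 := by ring
    linarith [hup2, hFknn, sq_nonneg ‖g‖]
end

section
/- Let H be an infinite-dimensional separable complex Hilbert space with orthonormal basis (e_m)_{m∈ℕ}, let V : H → H be a bounded linear operator that is an isometry, let d be a positive integer, and define b_m := (V*)^d e_m for m ∈ ℕ. Fix k ∈ ℕ and suppose there exist a positive integer s and f ∈ ker(V*) with ‖f‖ = 1 such that e_k = V^{s-1} f. Then the vector b_k is redundant — i.e. there exist A, B > 0 with A‖g‖² ≤ Σ_{m∈ℕ, m≠k} |⟨g, b_m⟩|² ≤ B‖g‖² for all g ∈ H — if and only if s ≤ d. -/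
open ContinuousLinearMap

local notation "⟪" x ", " y "⟫" => @inner ℂ _ _ x y

private lemma aux_tsum_ne {F : ℕ → ℝ} (hF : Summable F) (k : ℕ) :
    ∑' m : {m : ℕ // m ≠ k}, F m = ∑' m, F m - F k := by
  have h := Summable.tsum_add_tsum_compl (f := F) (s := ({k} : Set ℕ)) (hF.subtype _) (hF.subtype _)
  rw [tsum_singleton] at h
  have h2 : ∑' m : ↑(({k} : Set ℕ)ᶜ), F m = ∑' m : {m : ℕ // m ≠ k}, F m := by
    refine (Equiv.tsum_eq (Equiv.subtypeEquivRight (p := fun m => m ≠ k)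
      (q := fun m => m ∈ ({k} : Set ℕ)ᶜ) (fun m => by simp))
      (fun m : ↑(({k} : Set ℕ)ᶜ) => F m)).symm.trans ?_
    rfl
  rw [h2] at h
  linarith

private lemma aux_parseval {H : Type*} [NormedAddCommGroup H] [InnerProductSpace ℂ H]
    [CompleteSpace H] (e : HilbertBasis ℕ ℂ H) (x : H) :
    HasSum (fun m => ‖⟪x, e m⟫‖ ^ 2) (‖x‖ ^ 2) := by
  have h := (e.hasSum_inner_mul_inner x x).mapL Complex.reCLM
  have hterm : ∀ m, Complex.reCLM (⟪x, e m⟫ * ⟪e m, x⟫) = ‖⟪x, e m⟫‖ ^ 2 := by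
    intro m
    rw [← inner_conj_symm (e m) x, RCLike.mul_conj]
    simp [← Complex.ofReal_pow]
  have hx : Complex.reCLM ⟪x, x⟫ = ‖x‖ ^ 2 := by
    simpa using inner_self_eq_norm_sq (𝕜 := ℂ) x
  rw [hx] at h
  exact h.congr_fun fun m => (hterm m).symm

theorem stmt17 {H : Type*} [NormedAddCommGroup H] [InnerProductSpace ℂ H] [CompleteSpace H]
    (e : HilbertBasis ℕ ℂ H) (V : H →L[ℂ] H) (hV : ∀ x, ‖V x‖ = ‖x‖) (d : ℕ) (hd : 0 < d)
    (k : ℕ) (s : ℕ) (hs : 0 < s)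
    (f : H) (hf : f ∈ LinearMap.ker (ContinuousLinearMap.adjoint V : H →ₗ[ℂ] H)) (hfn : ‖f‖ = 1)
    (hek : e k = (V ^ (s - 1)) f) :
    (∃ A B : ℝ, 0 < A ∧ 0 < B ∧ ∀ g : H,
        A * ‖g‖ ^ 2 ≤
            ∑' m : {m : ℕ // m ≠ k},
              ‖(inner ℂ g ((ContinuousLinearMap.adjoint V ^ d) (e m)) : ℂ)‖ ^ 2 ∧
          ∑' m : {m : ℕ // m ≠ k},
              ‖(inner ℂ g ((ContinuousLinearMap.adjoint V ^ d) (e m)) : ℂ)‖ ^ 2 ≤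
            B * ‖g‖ ^ 2) ↔
      s ≤ d := by
  -- V preserves inner products
  have hinner : ∀ x y : H, ⟪V x, V y⟫ = ⟪x, y⟫ := fun x y =>
    LinearIsometry.inner_map_map ⟨(V : H →ₗ[ℂ] H), hV⟩ x y
  -- powers of V preserve inner products
  have hpowinner : ∀ (n : ℕ) (x y : H), ⟪(V ^ n) x, (V ^ n) y⟫ = ⟪x, y⟫ := by
    intro n
    induction n with
    | zero => simp
    | succ n ih =>
      intro x y
      rw [pow_succ, ContinuousLinearMap.mul_apply, ContinuousLinearMap.mul_apply,
        ih (V x) (V y), hinner]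
  have hiso : ∀ (n : ℕ) (x : H), ‖(V ^ n) x‖ = ‖x‖ := by
    intro n
    induction n with
    | zero => simp
    | succ n ih =>
      intro x
      rw [pow_succ, ContinuousLinearMap.mul_apply, ih (V x), hV]
  -- rewrite the inner products
  have hadjpow : ContinuousLinearMap.adjoint V ^ d = ContinuousLinearMap.adjoint (V ^ d) := by
    rw [← ContinuousLinearMap.star_eq_adjoint, ← ContinuousLinearMap.star_eq_adjoint, ← star_pow]
  have hterm : ∀ (g : H) (m : ℕ),
      (inner ℂ g ((ContinuousLinearMap.adjoint V ^ d) (e m)) : ℂ) = ⟪(V ^ d) g, e m⟫ := by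
    intro g m
    rw [hadjpow, ContinuousLinearMap.adjoint_inner_right]
  -- the key sum formula
  have hsum : ∀ g : H,
      ∑' m : {m : ℕ // m ≠ k},
          ‖(inner ℂ g ((ContinuousLinearMap.adjoint V ^ d) (e m)) : ℂ)‖ ^ 2 =
        ‖g‖ ^ 2 - ‖⟪(V ^ d) g, e k⟫‖ ^ 2 := by
    intro g
    have hpar := aux_parseval e ((V ^ d) g)
    have h1 : ∑' m : {m : ℕ // m ≠ k}, ‖⟪(V ^ d) g, e (m : ℕ)⟫‖ ^ 2 =
        ‖(V ^ d) g‖ ^ 2 - ‖⟪(V ^ d) g, e k⟫‖ ^ 2 := by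
      rw [aux_tsum_ne hpar.summable, hpar.tsum_eq]
    calc ∑' m : {m : ℕ // m ≠ k},
          ‖(inner ℂ g ((ContinuousLinearMap.adjoint V ^ d) (e m)) : ℂ)‖ ^ 2
        = ∑' m : {m : ℕ // m ≠ k}, ‖⟪(V ^ d) g, e (m : ℕ)⟫‖ ^ 2 := by
          exact tsum_congr fun m => by rw [hterm]
      _ = ‖(V ^ d) g‖ ^ 2 - ‖⟪(V ^ d) g, e k⟫‖ ^ 2 := h1
      _ = ‖g‖ ^ 2 - ‖⟪(V ^ d) g, e k⟫‖ ^ 2 := by rw [hiso]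
  constructor
  · rintro ⟨A, B, hA, hB, hAB⟩
    by_contra hds
    push_neg at hds
    -- d < s ; take g = V^(s-1-d) f
    set g : H := (V ^ (s - 1 - d)) f with hg
    have hgn : ‖g‖ = 1 := by rw [hg, hiso, hfn]
    have hcomp : (V ^ d) g = (V ^ (s - 1)) f := by
      rw [hg, ← ContinuousLinearMap.mul_apply, ← pow_add]
      congr 2
      omega
    have hik : ⟪(V ^ d) g, e k⟫ = 1 := by
      rw [hcomp, hek, hpowinner, inner_self_eq_norm_sq_to_K, hfn]
      norm_num
    have := (hAB g).1
    rw [hsum g, hik, hgn] at this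
    norm_num at this
    linarith
  · intro hsd
    refine ⟨1, 1, one_pos, one_pos, fun g => ?_⟩
    have hzero : ⟪(V ^ d) g, e k⟫ = 0 := by
      have hdecomp : (V ^ d) g = (V ^ (s - 1)) ((V ^ (d - s + 1)) g) := by
        rw [← ContinuousLinearMap.mul_apply, ← pow_add]
        congr 2
        omega
      rw [hdecomp, hek, hpowinner]
      have hstep : (V ^ (d - s + 1)) g = V ((V ^ (d - s)) g) := by
        rw [pow_succ', ContinuousLinearMap.mul_apply]
      rw [hstep]
      have hf0 : ContinuousLinearMap.adjoint V f = 0 := hf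
      rw [← inner_conj_symm, ← ContinuousLinearMap.adjoint_inner_left, hf0, inner_zero_left,
        map_zero]
    rw [hsum g, hzero]
    simp
end
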